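/- arXiv:1710.07675 — 7 statements merged into one kernel-verified Lean document; each statement's English description precedes it below -/
import Mathlib

section
/- Let $f:[0,\infty)\to(0,\infty)$ be a $C^1$ log-concave increasing function, and let $h$ be the inverse of the map $\rho\mapsto\int_0^{h}f(t)\,dt$, i.e. $\int_0^{h(\rho)}f(t)\,dt=\rho$. Then $f\circ h$ is concave; consequently, for all $a,b$ in the domain and $\theta\in[0,1]$, $f\circ h((1-\theta)a+\theta b)\ge(1-\theta)f\circ h(a)+\theta f\circ h(b)$. -/
/-!
Write `F u = ∫ t in 0..u, f t`, so that `h` inverts `F`. Concavity of `f ∘ h` says that the slopes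
of `f` measured against `F` decrease: for `x < y < z`,
`(f z - f y) / (F z - F y) ≤ (f y - f x) / (F y - F x)`.
Log-concavity makes `f' / f = (log f)'` antitone, so with `c = f' y / f y` we have `f' ≥ c f` on
`[x, y]` and `f' ≤ c f` on `[y, z]`; integrating gives `f y - f x ≥ c (F y - F x)` and
`f z - f y ≤ c (F z - F y)`.
-/

open Real MeasureTheory Set

theorem concaveOn_log_of_rpow_mul_rpow_le {f : ℝ → ℝ} {s : Set ℝ} (hs : Convex ℝ s)
    (hpos : ∀ t ∈ s, 0 < f t)
    (hlc : ∀ t₁ ∈ s, ∀ t₂ ∈ s, ∀ θ ∈ Icc (0:ℝ) 1,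
      f t₁ ^ θ * f t₂ ^ (1 - θ) ≤ f (θ * t₁ + (1 - θ) * t₂)) :
    ConcaveOn ℝ s (fun t => log (f t)) := by
  refine ⟨hs, fun u hu v hv p q hp hq hpq => ?_⟩
  obtain rfl : q = 1 - p := by linarith
  have hfu := rpow_pos_of_pos (hpos u hu) p
  have hfv := rpow_pos_of_pos (hpos v hv) (1 - p)
  have := log_le_log (mul_pos hfu hfv) (hlc u hu v hv p ⟨hp, by linarith⟩)
  rw [log_mul hfu.ne' hfv.ne', log_rpow (hpos u hu), log_rpow (hpos v hv)] at this
  simpa only [smul_eq_mul] using this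

theorem antitoneOn_derivWithin_div_of_concaveOn_log {f : ℝ → ℝ} {s : Set ℝ}
    (hs : UniqueDiffOn ℝ s) (hfd : DifferentiableOn ℝ f s) (hne : ∀ t ∈ s, f t ≠ 0)
    (hc : ConcaveOn ℝ s (fun t => log (f t))) :
    AntitoneOn (fun t => derivWithin f s t / f t) s := by
  intro u hu v hv huv
  have := hc.antitoneOn_derivWithin (fun t ht => (hfd t ht).log (hne t ht)) hu hv huv
  rwa [derivWithin.log (hfd u hu) (hne u hu) (hs u hu),
    derivWithin.log (hfd v hv) (hne v hv) (hs v hv)] at this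

theorem integral_derivWithin_Icc_eq_sub {f : ℝ → ℝ} {a b u v : ℝ} (hab : a < b)
    (hf : ContDiffOn ℝ 1 f (Icc a b)) (hu : u ∈ Icc a b) (hv : v ∈ Icc a b) (huv : u ≤ v) :
    ∫ t in u..v, derivWithin f (Icc a b) t = f v - f u := by
  have hsub : Icc u v ⊆ Icc a b := Icc_subset_Icc hu.1 hv.2
  refine intervalIntegral.integral_eq_sub_of_hasDeriv_right_of_le huv
    (hf.continuousOn.mono hsub) (fun t ht => ?_) ?_
  · have hmem : Icc a b ∈ nhds t := Icc_mem_nhds (hu.1.trans_lt ht.1) (ht.2.trans_le hv.2)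
    rw [derivWithin_of_mem_nhds hmem]
    exact (((hf.differentiableOn one_ne_zero) t (mem_of_mem_nhds hmem)).differentiableAt
      hmem).hasDerivAt.hasDerivWithinAt
  · exact ((hf.continuousOn_derivWithin (uniqueDiffOn_Icc hab) le_rfl).mono hsub)
      |>.intervalIntegrable_of_Icc huv

theorem ContinuousOn.intervalIntegrable_of_mem_Icc {f : ℝ → ℝ} {a b u v : ℝ}
    (hf : ContinuousOn f (Icc a b)) (hu : u ∈ Icc a b) (hv : v ∈ Icc a b) :
    IntervalIntegrable f volume u v :=
  (hf.mono (uIcc_subset_Icc hu hv)).intervalIntegrable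

theorem sub_mul_integral_le_sub_mul_integral_of_concaveOn_log {f : ℝ → ℝ} {a b x y z : ℝ}
    (hab : a < b) (hf : ContDiffOn ℝ 1 f (Icc a b)) (hpos : ∀ t ∈ Icc a b, 0 < f t)
    (hc : ConcaveOn ℝ (Icc a b) (fun t => log (f t)))
    (hx : x ∈ Icc a b) (hz : z ∈ Icc a b) (hxy : x ≤ y) (hyz : y ≤ z) :
    (f z - f y) * ∫ t in x..y, f t ≤ (f y - f x) * ∫ t in y..z, f t := by
  have hy : y ∈ Icc a b := ⟨hx.1.trans hxy, hyz.trans hz.2⟩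
  set d := derivWithin f (Icc a b)
  have hd : ContinuousOn d (Icc a b) :=
    hf.continuousOn_derivWithin (uniqueDiffOn_Icc hab) le_rfl
  have hanti := antitoneOn_derivWithin_div_of_concaveOn_log (uniqueDiffOn_Icc hab)
    (hf.differentiableOn one_ne_zero) (fun t ht => (hpos t ht).ne') hc
  set c := d y / f y
  have lower : c * ∫ t in x..y, f t ≤ f y - f x := by
    rw [← integral_derivWithin_Icc_eq_sub hab hf hx hy hxy,
      ← intervalIntegral.integral_const_mul]
    refine intervalIntegral.integral_mono_on hxy
      ((hf.continuousOn.intervalIntegrable_of_mem_Icc hx hy).const_mul c)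
      (hd.intervalIntegrable_of_mem_Icc hx hy) fun t ht => ?_
    have ht' : t ∈ Icc a b := ⟨hx.1.trans ht.1, ht.2.trans hy.2⟩
    rw [← le_div_iff₀ (hpos t ht')]
    exact hanti ht' hy ht.2
  have upper : f z - f y ≤ c * ∫ t in y..z, f t := by
    rw [← integral_derivWithin_Icc_eq_sub hab hf hy hz hyz,
      ← intervalIntegral.integral_const_mul]
    refine intervalIntegral.integral_mono_on hyz (hd.intervalIntegrable_of_mem_Icc hy hz)
      ((hf.continuousOn.intervalIntegrable_of_mem_Icc hy hz).const_mul c) fun t ht => ?_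
    have ht' : t ∈ Icc a b := ⟨hy.1.trans ht.1, ht.2.trans hz.2⟩
    rw [← div_le_iff₀ (hpos t ht')]
    exact hanti hy ht' ht.1
  have hI₁ : 0 ≤ ∫ t in x..y, f t :=
    intervalIntegral.integral_nonneg hxy fun t ht => (hpos t ⟨hx.1.trans ht.1, ht.2.trans hy.2⟩).le
  have hI₂ : 0 ≤ ∫ t in y..z, f t :=
    intervalIntegral.integral_nonneg hyz fun t ht => (hpos t ⟨hy.1.trans ht.1, ht.2.trans hz.2⟩).le
  calc (f z - f y) * ∫ t in x..y, f t
      ≤ (c * ∫ t in y..z, f t) * ∫ t in x..y, f t := mul_le_mul_of_nonneg_right upper hI₁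
    _ = (c * ∫ t in x..y, f t) * ∫ t in y..z, f t := by ring
    _ ≤ (f y - f x) * ∫ t in y..z, f t := mul_le_mul_of_nonneg_right lower hI₂

theorem strictMonoOn_integral_of_pos {f : ℝ → ℝ} {a b : ℝ} (hf : ContinuousOn f (Icc a b))
    (hpos : ∀ t ∈ Icc a b, 0 < f t) :
    StrictMonoOn (fun u => ∫ t in a..u, f t) (Icc a b) := by
  intro u hu v hv huv
  have ha : a ∈ Icc a b := ⟨le_rfl, hu.1.trans hu.2⟩
  rw [← sub_pos, intervalIntegral.integral_interval_sub_left
    (hf.intervalIntegrable_of_mem_Icc ha hv) (hf.intervalIntegrable_of_mem_Icc ha hu)]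
  exact intervalIntegral.intervalIntegral_pos_of_pos_on (hf.intervalIntegrable_of_mem_Icc hu hv)
    (fun t ht => hpos t ⟨hu.1.trans ht.1.le, ht.2.le.trans hv.2⟩) huv

theorem concaveOn_comp_of_integral_eq {f h : ℝ → ℝ} {a b : ℝ} (hab : a < b)
    (hf : ContDiffOn ℝ 1 f (Icc a b)) (hpos : ∀ t ∈ Icc a b, 0 < f t)
    (hc : ConcaveOn ℝ (Icc a b) (fun t => log (f t)))
    (hh : ∀ ρ ∈ Icc (0:ℝ) (∫ t in a..b, f t), h ρ ∈ Icc a b ∧ (∫ t in a..(h ρ), f t) = ρ) :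
    ConcaveOn ℝ (Icc (0:ℝ) (∫ t in a..b, f t)) (f ∘ h) := by
  have ha : a ∈ Icc a b := ⟨le_rfl, hab.le⟩
  have hmono : MonotoneOn h (Icc (0:ℝ) (∫ t in a..b, f t)) := fun u hu v hv huv =>
    ((strictMonoOn_integral_of_pos hf.continuousOn hpos).le_iff_le (hh u hu).1 (hh v hv).1).mp
      (by simpa only [(hh u hu).2, (hh v hv).2] using huv)
  have hint : ∀ u ∈ Icc (0:ℝ) (∫ t in a..b, f t), ∀ v ∈ Icc (0:ℝ) (∫ t in a..b, f t),
      ∫ t in h u..h v, f t = v - u := fun u hu v hv => by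
    rw [← intervalIntegral.integral_interval_sub_left
      (hf.continuousOn.intervalIntegrable_of_mem_Icc ha (hh v hv).1)
      (hf.continuousOn.intervalIntegrable_of_mem_Icc ha (hh u hu).1), (hh u hu).2, (hh v hv).2]
  refine concaveOn_of_slope_anti_adjacent (convex_Icc _ _) fun {x y z} hx hz hxy hyz => ?_
  have hy : y ∈ Icc (0:ℝ) (∫ t in a..b, f t) := ⟨hx.1.trans hxy.le, hyz.le.trans hz.2⟩
  have key := sub_mul_integral_le_sub_mul_integral_of_concaveOn_log hab hf hpos hc
    (hh x hx).1 (hh z hz).1 (hmono hx hy hxy.le) (hmono hy hz hyz.le)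
  rw [hint x hx y hy, hint y hy z hz] at key
  rw [div_le_div_iff₀ (sub_pos.2 hyz) (sub_pos.2 hxy)]
  exact key

theorem stmt0_general (f h : ℝ → ℝ)
    (hpos : ∀ t ∈ Icc (0:ℝ) 1, 0 < f t)
    (hC1 : ContDiffOn ℝ 1 f (Icc (0:ℝ) 1))
    (hlc : ∀ t₁ ∈ Icc (0:ℝ) 1, ∀ t₂ ∈ Icc (0:ℝ) 1, ∀ θ ∈ Icc (0:ℝ) 1,
      f t₁ ^ θ * f t₂ ^ (1 - θ) ≤ f (θ * t₁ + (1 - θ) * t₂))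
    (hh : ∀ ρ ∈ Icc (0:ℝ) (∫ t in (0:ℝ)..1, f t),
      h ρ ∈ Icc (0:ℝ) 1 ∧ (∫ t in (0:ℝ)..(h ρ), f t) = ρ) :
    ∀ a ∈ Icc (0:ℝ) (∫ t in (0:ℝ)..1, f t),
    ∀ b ∈ Icc (0:ℝ) (∫ t in (0:ℝ)..1, f t),
    ∀ θ ∈ Icc (0:ℝ) 1,
      (1 - θ) * f (h a) + θ * f (h b) ≤ f (h ((1 - θ) * a + θ * b)) := by
  intro a ha b hb θ hθ
  have hconc := concaveOn_comp_of_integral_eq one_pos hC1 hpos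
    (concaveOn_log_of_rpow_mul_rpow_le (convex_Icc 0 1) hpos hlc) hh
  simpa only [smul_eq_mul, Function.comp_apply] using
    hconc.2 ha hb (sub_nonneg.2 hθ.2) hθ.1 (sub_add_cancel 1 θ)

theorem stmt0 (f h : ℝ → ℝ)
    (hpos : ∀ t ∈ Icc (0:ℝ) 1, 0 < f t)
    (hmono : MonotoneOn f (Icc (0:ℝ) 1))
    (hC1 : ContDiffOn ℝ 1 f (Icc (0:ℝ) 1))
    (hlc : ∀ t₁ ∈ Icc (0:ℝ) 1, ∀ t₂ ∈ Icc (0:ℝ) 1, ∀ θ ∈ Icc (0:ℝ) 1,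
      f t₁ ^ θ * f t₂ ^ (1 - θ) ≤ f (θ * t₁ + (1 - θ) * t₂))
    (hh : ∀ ρ ∈ Icc (0:ℝ) (∫ t in (0:ℝ)..1, f t),
      h ρ ∈ Icc (0:ℝ) 1 ∧ (∫ t in (0:ℝ)..(h ρ), f t) = ρ) :
    ∀ a ∈ Icc (0:ℝ) (∫ t in (0:ℝ)..1, f t),
    ∀ b ∈ Icc (0:ℝ) (∫ t in (0:ℝ)..1, f t),
    ∀ θ ∈ Icc (0:ℝ) 1,
      (1 - θ) * f (h a) + θ * f (h b) ≤ f (h ((1 - θ) * a + θ * b)) :=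
  stmt0_general f h hpos hC1 hlc hh
end

section
/- Let $\gamma:I\to\mathbb{R}^d$ be $C^1$ on an interval $I$, and suppose $\det(\gamma'(t_1),\ldots,\gamma'(t_d))\ne 0$ whenever $t_1<\cdots<t_d$ in $I$. Then the vectors $\gamma(w_1)-\gamma(w_2),\ \gamma(w_2)-\gamma(w_3),\ \ldots,\ \gamma(w_d)-\gamma(w_{d+1})$ are linearly independent for any $w_1<w_2<\cdots<w_{d+1}$ in $I$. -/
/-!
If the differences `γ (w j) - γ (w (j+1))` were dependent, a nonzero linear form `f` would
vanish on all of them. Rolle's theorem applied to `f ∘ γ` on each `[w j, w (j+1)]` then yields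
interlaced points `t₁ < ⋯ < t_d` with `f (γ' t_j) = 0`, so the vectors `γ' t_j` are dependent too,
against the nonvanishing of the Jacobian determinant.
-/

open Set Module

theorem linearIndependent_iff_forall_dual_eq_zero {K V ι : Type*} [Field K] [AddCommGroup V]
    [Module K V] [FiniteDimensional K V] [Fintype ι] {v : ι → V}
    (hcard : Fintype.card ι = finrank K V) :
    LinearIndependent K v ↔ ∀ f : Dual K V, (∀ i, f (v i) = 0) → f = 0 := by
  have hann : ∀ f : Dual K V,
      f ∈ (Submodule.span K (range v)).dualAnnihilator ↔ ∀ i, f (v i) = 0 := by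
    intro f
    rw [← SetLike.mem_coe, Submodule.coe_dualAnnihilator_span]
    simp [range_subset_iff]
  have hspan : LinearIndependent K v ↔ Submodule.span K (range v) = ⊤ :=
    ⟨fun hv => hv.span_eq_top_of_card_eq_finrank' hcard,
      fun h => linearIndependent_of_top_le_span_of_card_eq_finrank h.ge hcard⟩
  rw [hspan, ← Submodule.dualAnnihilator_eq_bot_iff, Submodule.eq_bot_iff]
  simp only [hann]

theorem exists_mem_Ioo_map_deriv_eq_zero {E : Type*} [NormedAddCommGroup E] [NormedSpace ℝ E]
    (L : E →L[ℝ] ℝ) {γ : ℝ → E} {a b : ℝ} (hab : a < b) (hγ : DifferentiableOn ℝ γ (Icc a b))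
    (hL : L (γ a) = L (γ b)) : ∃ c ∈ Ioo a b, L (deriv γ c) = 0 := by
  obtain ⟨c, hc, hderiv⟩ :=
    exists_deriv_eq_zero hab (L.continuous.comp_continuousOn hγ.continuousOn) hL
  have hγc : HasDerivAt γ (deriv γ c) c :=
    (hγ.differentiableAt (Icc_mem_nhds hc.1 hc.2)).hasDerivAt
  exact ⟨c, hc, (L.hasFDerivAt.comp_hasDerivAt c hγc).deriv.symm.trans hderiv⟩

theorem strictMono_of_forall_mem_Ioo_castSucc_succ {α : Type*} [Preorder α] {n : ℕ}
    {w : Fin (n + 1) → α} {t : Fin n → α} (hw : Monotone w)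
    (ht : ∀ j, t j ∈ Ioo (w j.castSucc) (w j.succ)) : StrictMono t := fun j k hjk =>
  calc t j < w j.succ := (ht j).2
    _ ≤ w k.castSucc := hw (Fin.succ_le_castSucc_iff.mpr hjk)
    _ < t k := (ht k).1

theorem exists_strictMono_map_deriv_eq_zero {E : Type*} [NormedAddCommGroup E]
    [NormedSpace ℝ E] (L : E →L[ℝ] ℝ) {γ : ℝ → E} {I : Set ℝ} (hI : I.OrdConnected)
    (hγ : DifferentiableOn ℝ γ I) {n : ℕ} {w : Fin (n + 1) → ℝ} (hwI : ∀ j, w j ∈ I)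
    (hw : StrictMono w) (hL : ∀ j : Fin n, L (γ (w j.castSucc)) = L (γ (w j.succ))) :
    ∃ t : Fin n → ℝ, (∀ j, t j ∈ I) ∧ StrictMono t ∧ ∀ j, L (deriv γ (t j)) = 0 := by
  have hsub : ∀ j : Fin n, Icc (w j.castSucc) (w j.succ) ⊆ I := fun j => hI.out (hwI _) (hwI _)
  choose t ht hLt using fun j =>
    exists_mem_Ioo_map_deriv_eq_zero L (hw Fin.castSucc_lt_succ) (hγ.mono (hsub j)) (hL j)
  exact ⟨t, fun j => hsub j (Ioo_subset_Icc_self (ht j)),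
    strictMono_of_forall_mem_Ioo_castSucc_succ hw.monotone ht, hLt⟩

theorem stmt7_general (d : ℕ) (I : Set ℝ) (hI : I.OrdConnected)
    (γ : ℝ → (Fin d → ℝ)) (hγ : ContDiffOn ℝ 1 γ I)
    (hdet : ∀ t : Fin d → ℝ, (∀ i, t i ∈ I) → StrictMono t →
      Matrix.det (Matrix.of fun i j => deriv γ (t i) j) ≠ 0) :
    ∀ w : Fin (d + 1) → ℝ, (∀ j, w j ∈ I) → StrictMono w →
      LinearIndependent ℝ (fun j : Fin d => γ (w j.castSucc) - γ (w j.succ)) := by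
  intro w hwI hw
  have hcard : Fintype.card (Fin d) = finrank ℝ (Fin d → ℝ) := by simp
  rw [linearIndependent_iff_forall_dual_eq_zero hcard]
  intro f hf
  obtain ⟨t, htI, ht, hft⟩ :=
    exists_strictMono_map_deriv_eq_zero (LinearMap.toContinuousLinearMap f) hI
      (hγ.differentiableOn one_ne_zero) hwI hw fun j => by simpa [sub_eq_zero] using hf j
  have hrows := Matrix.linearIndependent_rows_of_det_ne_zero (hdet t htI ht)
  exact (linearIndependent_iff_forall_dual_eq_zero hcard).mp hrows f hft

theorem stmt7 (d : ℕ) (hd : 1 ≤ d) (I : Set ℝ) (hI : I.OrdConnected)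
    (γ : ℝ → (Fin d → ℝ)) (hγ : ContDiffOn ℝ 1 γ I)
    (hdet : ∀ t : Fin d → ℝ, (∀ i, t i ∈ I) → StrictMono t →
      Matrix.det (Matrix.of fun i j => deriv γ (t i) j) ≠ 0) :
    ∀ w : Fin (d + 1) → ℝ, (∀ j, w j ∈ I) → StrictMono w →
      LinearIndependent ℝ (fun j : Fin d => γ (w j.castSucc) - γ (w j.succ)) :=
  stmt7_general d I hI γ hγ hdet
end

section
/- Let $I\subseteq\mathbb{R}$ be an interval and let $P$ be a real polynomial of degree $N$ whose complex zeros have real parts contained in a finite set $Z$. Then $I$ can be decomposed into at most $C(N,\#Z)$ subintervals $I_j$ such that on each $I_j$ there exist $a_j\in Z$, an integer $0\le k_j\le N$, and a constant $C_j>0$ with $|P(t)|\sim C_j|t-a_j|^{k_j}$ and $\mathrm{dist}(t,Z)=|t-a_j|$ for all $t\in I_j$, with implicit constants depending only on $N$. -/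
/-!
Over `ℂ`, `|P t| = |lc P| * ∏ |t - z|` over the roots `z`. If `a ∈ Z` is nearest to `t`, then
`Re z ∈ Z` gives `|t - a| ≤ |t - z|`, and the triangle inequality makes `|t - z|` comparable,
within a factor `2`, to `max |t - a| |a - z|`. Cut `ℝ` according to the nearest point `a`, the
side of `a` containing `t`, and the position of `|t - a|` among the finitely many distances
`|a - z|`. On each piece every factor is comparable either to `|t - a|` (roots closer to `a`) or to
the constant `|a - z|`, so `|P t| ~ C |t - a| ^ k`, with `k` the number of closer roots.
-/

open Polynomial

theorem Polynomial.norm_eval_eq_mul_prod_aroots {K L : Type*} [NormedField K] [NormedField L]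
    [NormedAlgebra K L] [IsAlgClosed L] (P : K[X]) (x : K) :
    ‖P.eval x‖ = ‖P.leadingCoeff‖ * ((P.aroots L).map fun z => ‖algebraMap K L x - z‖).prod := by
  rw [← norm_algebraMap' L, ← eval₂_hom, ← eval_map,
    (IsAlgClosed.splits _).eval_eq_prod_roots, leadingCoeff_map, norm_mul, norm_algebraMap']
  exact congrArg _ ((map_multiset_prod (normHom (α := L)) _).trans (by rw [Multiset.map_map]; rfl))

theorem max_dist_le_two_mul_dist {X : Type*} [PseudoMetricSpace X] {t a z : X}
    (h : dist t a ≤ dist t z) : max (dist t a) (dist a z) ≤ 2 * dist t z := by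
  have := dist_triangle_left a z t
  exact max_le (by linarith [dist_nonneg (x := t) (y := z)]) (by linarith)

theorem dist_le_two_mul_max_dist {X : Type*} [PseudoMetricSpace X] (t a z : X) :
    dist t z ≤ 2 * max (dist t a) (dist a z) := by
  linarith [dist_triangle t a z, le_max_left (dist t a) (dist a z),
    le_max_right (dist t a) (dist a z)]

theorem Multiset.prod_map_le_pow_card_mul {ι R : Type*} [CommMonoidWithZero R] [PartialOrder R]
    [ZeroLEOneClass R] [PosMulMono R] {s : Multiset ι} {f g : ι → R} {c : R}
    (hf : ∀ i ∈ s, 0 ≤ f i) (h : ∀ i ∈ s, f i ≤ c * g i) :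
    (s.map f).prod ≤ c ^ card s * (s.map g).prod := by
  calc (s.map f).prod ≤ (s.map fun i => c * g i).prod := prod_map_le_prod_map₀ f _ hf h
    _ = c ^ card s * (s.map g).prod := by rw [prod_map_mul, map_const', prod_replicate]

def offsetBand (V : Finset ℝ) (v : ℝ) : Set ℝ := {u | v ≤ u ∧ ∀ w ∈ V, v < w → u ≤ w}

def voronoiCell (Z : Finset ℝ) (a : ℝ) : Set ℝ := {t | ∀ z ∈ Z, |t - a| ≤ |t - z|}

/-- The sign `s ∈ {1, -1}` picks the side of `a`; when `0 ≤ v` it forces `s * (t - a) = |t - a|`. -/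
def decompCell (Z V : Finset ℝ) (a v s : ℝ) : Set ℝ :=
  voronoiCell Z a ∩ (fun t => s * (t - a)) ⁻¹' offsetBand V v

theorem ordConnected_offsetBand (V : Finset ℝ) (v : ℝ) : (offsetBand V v).OrdConnected :=
  ⟨fun _ hx _ hy _ hu => ⟨hx.1.trans hu.1, fun w hw hvw => hu.2.trans (hy.2 w hw hvw)⟩⟩

theorem ordConnected_setOf_abs_sub_le_abs_sub (a z : ℝ) :
    {t : ℝ | |t - a| ≤ |t - z|}.OrdConnected := by
  refine ⟨fun x hx y hy t ht => ?_⟩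
  simp only [Set.mem_ofPred_eq, ← sq_le_sq] at hx hy ⊢
  rcases le_total a z with haz | hza <;> nlinarith [ht.1, ht.2]

theorem ordConnected_voronoiCell (Z : Finset ℝ) (a : ℝ) : (voronoiCell Z a).OrdConnected := by
  have : voronoiCell Z a = ⋂ z ∈ Z, {t : ℝ | |t - a| ≤ |t - z|} := by
    ext t; simp [voronoiCell]
  rw [this]
  exact Set.ordConnected_biInter fun z _ => ordConnected_setOf_abs_sub_le_abs_sub a z

theorem ordConnected_decompCell (Z V : Finset ℝ) (a v s : ℝ) :
    (decompCell Z V a v s).OrdConnected := by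
  refine (ordConnected_voronoiCell Z a).inter ?_
  rcases le_total 0 s with hs | hs
  · exact (ordConnected_offsetBand V v).preimage_mono fun _ _ hxy =>
      mul_le_mul_of_nonneg_left (sub_le_sub_right hxy a) hs
  · exact (ordConnected_offsetBand V v).preimage_anti fun _ _ hxy =>
      mul_le_mul_of_nonpos_left (sub_le_sub_right hxy a) hs

theorem Finset.exists_mem_offsetBand {V : Finset ℝ} {u : ℝ} (h : ∃ v ∈ V, v ≤ u) :
    ∃ v ∈ V, u ∈ offsetBand V v := by
  have hne : (V.filter (· ≤ u)).Nonempty := by simpa [Finset.filter_nonempty_iff] using h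
  obtain ⟨hvV, hvu⟩ := Finset.mem_filter.mp (Finset.max'_mem _ hne)
  refine ⟨_, hvV, hvu, fun w hw hvw => ?_⟩
  by_contra! hwu
  exact (Finset.le_max' _ w (Finset.mem_filter.mpr ⟨hw, hwu.le⟩)).not_gt hvw

theorem exists_mem_voronoiCell {Z : Finset ℝ} (hZ : Z.Nonempty) (t : ℝ) :
    ∃ a ∈ Z, t ∈ voronoiCell Z a :=
  Z.exists_min_image (fun z => |t - z|) hZ

theorem iUnion_decompCell_eq_univ {Z V : Finset ℝ} (hZ : Z.Nonempty) (hV : 0 ∈ V) :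
    ⋃ p ∈ Z ×ˢ V ×ˢ ({1, -1} : Finset ℝ), decompCell Z V p.1 p.2.1 p.2.2 = Set.univ := by
  refine Set.eq_univ_of_forall fun t => ?_
  obtain ⟨a, ha, hta⟩ := exists_mem_voronoiCell hZ t
  obtain ⟨v, hv, hband⟩ := Finset.exists_mem_offsetBand ⟨0, hV, abs_nonneg (t - a)⟩
  have hs : ∃ s ∈ ({1, -1} : Finset ℝ), s * (t - a) = |t - a| := by
    rcases le_total a t with hat | hta'
    · exact ⟨1, by simp, by simp [abs_of_nonneg (sub_nonneg.mpr hat)]⟩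
    · exact ⟨-1, by simp, by simp [abs_of_nonpos (sub_nonpos.mpr hta')]⟩
  obtain ⟨s, hs, hst⟩ := hs
  exact Set.mem_biUnion (x := (a, v, s)) (Finset.mem_product.mpr ⟨ha, Finset.mem_product.mpr
    ⟨hv, hs⟩⟩) ⟨hta, show s * (t - a) ∈ offsetBand V v from hst ▸ hband⟩

theorem abs_sub_mem_offsetBand_of_mem_decompCell {Z V : Finset ℝ} {a v s t : ℝ} (hv : 0 ≤ v)
    (hs : s ∈ ({1, -1} : Finset ℝ)) (ht : t ∈ decompCell Z V a v s) :
    |t - a| ∈ offsetBand V v := by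
  have hu : s * (t - a) = |t - a| := by
    have hvs : v ≤ s * (t - a) := ht.2.1
    rw [← abs_of_nonneg (hv.trans hvs), abs_mul]
    rcases Finset.mem_insert.mp hs with rfl | hs <;> simp_all
  exact hu ▸ ht.2

theorem Multiset.prod_map_max_eq_of_mem_offsetBand {α : Type*} (R : Multiset α) (d : α → ℝ)
    {V : Finset ℝ} {u v : ℝ} (hV : ∀ z ∈ R, d z ∈ V) (hu : u ∈ offsetBand V v) :
    (R.map fun z => max u (d z)).prod =
      u ^ card (R.filter (d · ≤ v)) * ((R.filter fun z => ¬ d z ≤ v).map d).prod := by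
  have hnear : ∀ z ∈ R.filter (d · ≤ v), max u (d z) = u := fun z hz =>
    max_eq_left ((mem_filter.mp hz).2.trans hu.1)
  have hfar : ∀ z ∈ R.filter fun z => ¬ d z ≤ v, max u (d z) = d z := fun z hz =>
    max_eq_right (hu.2 _ (hV z (mem_filter.mp hz).1) (not_le.mp (mem_filter.mp hz).2))
  conv_lhs => rw [← filter_add_not (d · ≤ v) R, map_add, prod_add, map_congr rfl hnear,
    map_congr rfl hfar, map_const', prod_replicate]

theorem abs_eval_comparable_prod_max {P : ℝ[X]} {Z : Finset ℝ}
    (hroots : ∀ z ∈ P.aroots ℂ, z.re ∈ Z) {a t : ℝ} (ht : t ∈ voronoiCell Z a) :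
    (1 / 2) ^ Multiset.card (P.aroots ℂ) * (|P.leadingCoeff| *
        ((P.aroots ℂ).map fun z => max |t - a| (dist (a : ℂ) z)).prod) ≤ |P.eval t| ∧
      |P.eval t| ≤ 2 ^ Multiset.card (P.aroots ℂ) * (|P.leadingCoeff| *
        ((P.aroots ℂ).map fun z => max |t - a| (dist (a : ℂ) z)).prod) := by
  set R := P.aroots ℂ
  set M := (R.map fun z => max |t - a| (dist (a : ℂ) z)).prod
  set D := (R.map fun z => dist (t : ℂ) z).prod
  have heval : |P.eval t| = |P.leadingCoeff| * D := by
    simpa [D, R, Complex.dist_eq] using P.norm_eval_eq_mul_prod_aroots (L := ℂ) t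
  have hta : dist (t : ℂ) a = |t - a| := by simp [Complex.dist_eq, ← Complex.ofReal_sub]
  have hnear : ∀ z ∈ R, dist (t : ℂ) a ≤ dist (t : ℂ) z := fun z hz =>
    hta ▸ (ht z.re (hroots z hz)).trans
      (by simpa [Complex.dist_eq] using Complex.abs_re_le_norm ((t : ℂ) - z))
  have hMD : M ≤ 2 ^ Multiset.card R * D := Multiset.prod_map_le_pow_card_mul
    (fun z _ => (abs_nonneg _).trans (le_max_left _ _))
    (fun z hz => hta ▸ max_dist_le_two_mul_dist (hnear z hz))
  have hDM : D ≤ 2 ^ Multiset.card R * M := Multiset.prod_map_le_pow_card_mul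
    (fun z _ => dist_nonneg) (fun z _ => hta ▸ dist_le_two_mul_max_dist (t : ℂ) a z)
  have hhalf : (1 / 2 : ℝ) ^ Multiset.card R * 2 ^ Multiset.card R = 1 := by
    rw [← mul_pow]; norm_num
  rw [heval]
  constructor
  · calc _ ≤ (1 / 2) ^ Multiset.card R * (|P.leadingCoeff| * (2 ^ Multiset.card R * D)) := by
          gcongr
      _ = _ := by linear_combination |P.leadingCoeff| * D * hhalf
  · calc _ ≤ |P.leadingCoeff| * (2 ^ Multiset.card R * M) := by gcongr
      _ = _ := by ring

theorem exists_abs_eval_comparable_on_decompCell {N : ℕ} {P : ℝ[X]} (hP : P ≠ 0)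
    (hdeg : P.natDegree ≤ N) {Z V : Finset ℝ} (hroots : ∀ z ∈ P.aroots ℂ, z.re ∈ Z) {a v s : ℝ}
    (hV : ∀ z ∈ P.aroots ℂ, dist (a : ℂ) z ∈ V) (hv : 0 ≤ v) (hs : s ∈ ({1, -1} : Finset ℝ)) :
    ∃ k ≤ N, ∃ C : ℝ, 0 < C ∧ ∀ t ∈ decompCell Z V a v s,
      (1 / 2) ^ N * C * |t - a| ^ k ≤ |P.eval t| ∧ |P.eval t| ≤ 2 ^ N * C * |t - a| ^ k := by
  set R := P.aroots ℂ
  set k := Multiset.card (R.filter (dist (a : ℂ) · ≤ v))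
  set F := ((R.filter fun z => ¬ dist (a : ℂ) z ≤ v).map (dist (a : ℂ))).prod
  have hR : Multiset.card R ≤ N := ((card_roots' _).trans natDegree_map_le).trans hdeg
  have hF : 0 < F := Multiset.prod_pos fun d hd => by
    obtain ⟨z, hz, rfl⟩ := Multiset.mem_map.mp hd
    exact hv.trans_lt (not_le.mp (Multiset.mem_filter.mp hz).2)
  have hC : 0 < |P.leadingCoeff| := abs_pos.mpr (leadingCoeff_ne_zero.mpr hP)
  refine ⟨k, (Multiset.card_le_card (Multiset.filter_le _ R)).trans hR, |P.leadingCoeff| * F,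
    mul_pos hC hF, fun t ht => ?_⟩
  obtain ⟨hlow, hup⟩ := abs_eval_comparable_prod_max hroots ht.1
  rw [R.prod_map_max_eq_of_mem_offsetBand _ hV
    (abs_sub_mem_offsetBand_of_mem_decompCell hv hs ht)] at hlow hup
  have hCF : 0 ≤ |P.leadingCoeff| * (|t - a| ^ k * F) := by positivity
  constructor
  · calc _ = (1 / 2) ^ N * (|P.leadingCoeff| * (|t - a| ^ k * F)) := by ring
      _ ≤ _ := mul_le_mul_of_nonneg_right (pow_le_pow_of_le_one (by norm_num) (by norm_num) hR) hCF
      _ ≤ _ := hlow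
  · calc _ ≤ _ := hup
      _ ≤ 2 ^ N * (|P.leadingCoeff| * (|t - a| ^ k * F)) :=
        mul_le_mul_of_nonneg_right (pow_le_pow_right₀ (by norm_num) hR) hCF
      _ = _ := by ring

theorem Finset.exists_fin_iUnion_eq_inter {α ι : Type*} (S : Finset ι) {I : Set α}
    {cell : ι → Set α} (hcover : I ⊆ ⋃ i ∈ S, cell i) :
    ∃ J : Fin S.card → Set α, I = ⋃ j, J j ∧ ∀ j, ∃ i ∈ S, J j = I ∩ cell i := by
  refine ⟨fun j => I ∩ cell (S.equivFin.symm j), ?_, fun j => ⟨_, (S.equivFin.symm j).2, rfl⟩⟩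
  refine subset_antisymm (fun t ht => ?_) (Set.iUnion_subset fun j => Set.inter_subset_left)
  obtain ⟨i, hi, hti⟩ := Set.mem_iUnion₂.mp (hcover ht)
  exact Set.mem_iUnion.mpr ⟨S.equivFin ⟨i, hi⟩, by simpa using ⟨ht, hti⟩⟩

theorem exists_finset_nonneg_dist_aroots (P : ℝ[X]) (Z : Finset ℝ) :
    ∃ V : Finset ℝ, V.card ≤ Z.card * P.natDegree + 1 ∧ 0 ∈ V ∧ (∀ v ∈ V, 0 ≤ v) ∧
      ∀ a ∈ Z, ∀ z ∈ P.aroots ℂ, dist (a : ℂ) z ∈ V := by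
  classical
  refine ⟨insert 0 (Finset.image₂ (fun (a : ℝ) z => dist (a : ℂ) z) Z (P.aroots ℂ).toFinset),
    ?_, Finset.mem_insert_self _ _, fun v hv => ?_, fun a ha z hz =>
      Finset.mem_insert_of_mem (Finset.mem_image₂_of_mem ha (Multiset.mem_toFinset.mpr hz))⟩
  · have hR : (P.aroots ℂ).toFinset.card ≤ P.natDegree :=
      (Multiset.toFinset_card_le _).trans ((card_roots' _).trans natDegree_map_le)
    calc _ ≤ Z.card * (P.aroots ℂ).toFinset.card + 1 :=
          (Finset.card_insert_le _ _).trans (Nat.add_le_add_right (Finset.card_image₂_le _ _ _) 1)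
      _ ≤ _ := by gcongr
  · rcases Finset.mem_insert.mp hv with rfl | hv
    · rfl
    · obtain ⟨b, -, z, -, rfl⟩ := Finset.mem_image₂.mp hv
      exact dist_nonneg

theorem stmt12 (N m : ℕ) :
    ∃ (K : ℕ) (c₁ c₂ : ℝ), 0 < c₁ ∧ 0 < c₂ ∧
      ∀ P : Polynomial ℝ, P ≠ 0 → P.natDegree ≤ N →
      ∀ Z : Finset ℝ, Z.Nonempty → Z.card = m →
        (∀ z : ℂ, (P.map (algebraMap ℝ ℂ)).IsRoot z → z.re ∈ Z) →
      ∀ I : Set ℝ, I.OrdConnected →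
        ∃ (n : ℕ) (J : Fin n → Set ℝ), n ≤ K ∧ (I = ⋃ j, J j) ∧
          ∀ j : Fin n, J j ⊆ I ∧ (J j).OrdConnected ∧
            ∃ a ∈ Z, ∃ k ≤ N, ∃ Cj : ℝ, 0 < Cj ∧
              ∀ t ∈ J j,
                c₁ * Cj * |t - a| ^ k ≤ |P.eval t| ∧
                |P.eval t| ≤ c₂ * Cj * |t - a| ^ k ∧
                ∀ z ∈ Z, |t - a| ≤ |t - z| := by
  refine ⟨m * ((m * N + 1) * 2), (1 / 2) ^ N, 2 ^ N, by positivity, by positivity, ?_⟩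
  intro P hP hdeg Z hZ hZcard hroots I hI
  replace hroots : ∀ z ∈ P.aroots ℂ, z.re ∈ Z := fun z hz => hroots z (mem_roots'.mp hz).2
  obtain ⟨V, hVcard, hV0, hVnonneg, hV⟩ := exists_finset_nonneg_dist_aroots P Z
  obtain ⟨J, hIJ, hJ⟩ := (Z ×ˢ V ×ˢ ({1, -1} : Finset ℝ)).exists_fin_iUnion_eq_inter
    ((iUnion_decompCell_eq_univ hZ hV0).symm ▸ Set.subset_univ I)
  refine ⟨_, J, ?_, hIJ, fun j => ?_⟩
  · rw [Finset.card_product, Finset.card_product, hZcard]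
    exact Nat.mul_le_mul_left m (Nat.mul_le_mul (hVcard.trans (by rw [hZcard]; gcongr))
      Finset.card_le_two)
  obtain ⟨⟨a, v, s⟩, hmem, hJj⟩ := hJ j
  obtain ⟨ha, hv, hs⟩ : a ∈ Z ∧ v ∈ V ∧ s ∈ ({1, -1} : Finset ℝ) := by simpa using hmem
  obtain ⟨k, hk, C, hC, hbound⟩ :=
    exists_abs_eval_comparable_on_decompCell hP hdeg hroots (hV a ha) (hVnonneg v hv) hs
  rw [hJj]
  exact ⟨Set.inter_subset_left, hI.inter (ordConnected_decompCell Z V a v s), a, ha, k, hk, C, hC,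
    fun t ht => ⟨(hbound t ht.2).1, (hbound t ht.2).2, ht.2.1⟩⟩
end

section
/- Let $t_1\le t_2\le\cdots\le t_k$ be reals and for $1\le j\le k-1$ set $m_j=\tfrac{k-j}{k}t_j+\tfrac{j}{k}t_{j+1}$. If $s_i\in[t_i'',t_{i+1}']$ where $t_{j+1}'=m_j+\tfrac{t_{j+1}-t_j}{2k}$ and $t_j''=m_j-\tfrac{t_{j+1}-t_j}{2k}$, then for all $1\le i<j\le k-1$: $s_j-s_i\ge c_k\,(t_{j+1}-t_i)$ for a constant $c_k>0$ depending only on $k$. -/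
theorem stmt13 (k : ℕ) (hk : 2 ≤ k) :
    ∃ c : ℝ, 0 < c ∧ ∀ t s : ℕ → ℝ,
      (∀ i, 1 ≤ i → i < k → t i ≤ t (i + 1)) →
      (∀ i, 1 ≤ i → i ≤ k - 1 →
        (((k : ℝ) - i) * t i + i * t (i + 1)) / k - (t (i + 1) - t i) / (2 * k) ≤ s i ∧
          s i ≤ (((k : ℝ) - i) * t i + i * t (i + 1)) / k + (t (i + 1) - t i) / (2 * k)) →
      ∀ i j, 1 ≤ i → i < j → j ≤ k - 1 → c * (t (j + 1) - t i) ≤ s j - s i := by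
  have hK : (2 : ℝ) ≤ (k : ℝ) := by exact_mod_cast hk
  have hK0 : (0 : ℝ) < (k : ℝ) := by linarith
  have h2K0 : (0 : ℝ) < 2 * (k : ℝ) := by linarith
  refine ⟨1 / (2 * k), by positivity, ?_⟩
  intro t s hmono hs i j hi hij hjk
  have hchain : ∀ a b : ℕ, 1 ≤ a → a ≤ b → b ≤ k → t a ≤ t b := by
    intro a b ha hab hbk
    induction b with
    | zero => omega
    | succ n ih =>
      rcases Nat.lt_or_ge a (n + 1) with h | h
      · exact le_trans (ih (by omega) (by omega)) (hmono n (by omega) (by omega))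
      · have : a = n + 1 := by omega
        rw [this]
  have hik : i ≤ k - 1 := by omega
  have hsi := (hs i hi hik).2
  have hsj := (hs j (by omega) hjk).1
  have hdj : t j ≤ t (j + 1) := hmono j (by omega) (by omega)
  have hdi : t i ≤ t (i + 1) := hmono i hi (by omega)
  have hmid : t (i + 1) ≤ t j := hchain (i + 1) j (by omega) (by omega) (by omega)
  have hJ : (1 : ℝ) ≤ (j : ℝ) := by exact_mod_cast (by omega : 1 ≤ j)
  have hI : (1 : ℝ) ≤ (i : ℝ) := by exact_mod_cast hi
  have hIk : (i : ℝ) ≤ (k : ℝ) - 1 := by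
    have h2 : (i : ℝ) + 1 ≤ (k : ℝ) := by exact_mod_cast (by omega : i + 1 ≤ k)
    linarith
  rw [show (1 : ℝ) / (2 * k) * (t (j + 1) - t i) = (t (j + 1) - t i) / (2 * k) by ring,
    div_le_iff₀ h2K0]
  rw [div_sub_div _ _ (ne_of_gt hK0) (ne_of_gt h2K0), div_le_iff₀ (by positivity)] at hsj
  rw [div_add_div _ _ (ne_of_gt hK0) (ne_of_gt h2K0), le_div_iff₀ (by positivity)] at hsi
  nlinarith [mul_nonneg (mul_nonneg hK0.le (sub_nonneg.2 hdj)) (sub_nonneg.2 hJ),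
    mul_nonneg (mul_nonneg hK0.le (sub_nonneg.2 hdi)) (by linarith : (0:ℝ) ≤ (k : ℝ) - 1 - i),
    mul_nonneg (mul_nonneg hK0.le (sub_nonneg.2 hmid)) (by linarith : (0:ℝ) ≤ 2 * (k : ℝ) - 1),
    mul_nonneg (sub_nonneg.2 hdj) (by linarith : (0:ℝ) ≤ (k : ℝ) - 1),
    mul_nonneg (sub_nonneg.2 hdi) (by linarith : (0:ℝ) ≤ (k : ℝ) - 1),
    mul_pos hK0 h2K0]
end

section
/- Let $B>0$, $d\ge 2$, and $t_1<t_2<\cdots<t_d$. Then $\int_{t_1}^{t_2}\cdots\int_{t_{d-1}}^{t_d} e^{-\frac{B}{d-1}(s_1+\cdots+s_{d-1})}\prod_{1\le i<j\le d-1}(s_j-s_i)\,ds_{d-1}\cdots ds_1 \;\ge\; c_d\, e^{-\frac{B}{d}(t_1+\cdots+t_d)}\, e^{c_d B(t_d-t_1)}\prod_{1\le i<j\le d}(t_j-t_i)$, for a constant $c_d>0$ depending only on $d$. -/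
/-!
Write `x₀ < ⋯ < xₙ` for the points (`n = d - 1`) and `δₐ = min (xₐ₊₁ - xₐ) B⁻¹` for the gaps
capped at `B⁻¹`. On the sub-box `xₐ + δₐ/4 ≤ sₐ ≤ xₐ + δₐ/2` the weight is at least
`e^{-1/2} e^{-(B/n) ∑_{a<n} xₐ}`, each Vandermonde factor `s_b - sₐ` (`a < b`) is at least
`(x_b - xₐ + δ_b)/4`, and the volume supplies the diagonal factors `δₐ/4`. So the integral
dominates a product over the pairs `a ≤ b`, which are the pairs `(a, b + 1)` of the `n + 1` points.
Against `x_{b+1} - xₐ` each factor loses at most `(4/β) e^{βB(x_{b+1} - xₐ)}`: the cap costs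
something only when the gap exceeds `B⁻¹`, and then the exponential pays for it. These losses are
absorbed by the gain from passing to the average of all the points:
`(B/n) ∑_{a<n} xₐ = (B/(n+1)) ∑ xᵢ - B/(n(n+1)) ∑_{a<n} (xₙ - xₐ)`, and the last sum is at least
`xₙ - x₀`.
-/

open MeasureTheory Finset Real

lemma sum_Icc_one_eq_sum_fin {M : Type*} [AddCommMonoid M] (f : ℕ → M) (m : ℕ) :
    ∑ i ∈ Icc 1 m, f i = ∑ i : Fin m, f (i + 1) := by
  rw [Fin.sum_univ_eq_sum_range (fun i => f (i + 1)), range_eq_Ico, sum_Ico_add', zero_add,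
    Ico_add_one_right_eq_Icc]

lemma prod_filter_le_eq_prod_filter_lt_mul_prod {ι M : Type*} [Fintype ι] [LinearOrder ι]
    [CommMonoid M] (f : ι × ι → M) :
    ∏ p ∈ univ.filter (fun p : ι × ι => p.1 ≤ p.2), f p =
      (∏ p ∈ univ.filter (fun p : ι × ι => p.1 < p.2), f p) * ∏ i, f (i, i) := by
  rw [← prod_diag, ← prod_union]
  · congr 1
    ext p
    simp [le_iff_lt_or_eq]
  · rw [disjoint_left]
    intro p hp hd
    simp_all

lemma prod_filter_lt_Icc_eq_prod_filter_le_fin {M : Type*} [CommMonoid M] (g : ℕ → ℕ → M)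
    (n : ℕ) :
    ∏ p ∈ (Icc 1 (n + 1) ×ˢ Icc 1 (n + 1)).filter (fun p => p.1 < p.2), g p.1 p.2 =
      ∏ p ∈ univ.filter (fun p : Fin n × Fin n => p.1 ≤ p.2), g (p.1 + 1) (p.2 + 2) := by
  symm
  refine prod_bij (fun p _ => ((p.1 : ℕ) + 1, (p.2 : ℕ) + 2)) ?_ ?_ ?_ (fun _ _ => rfl)
  · intro p hp
    have := p.1.isLt; have := p.2.isLt
    simp only [mem_filter, mem_univ, true_and] at hp
    simp only [mem_filter, mem_product, mem_Icc]
    omega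
  · intro p _ q _ h
    simp only [Prod.mk.injEq] at h
    ext <;> omega
  · intro q hq
    simp only [mem_filter, mem_product, mem_Icc] at hq
    refine ⟨(⟨q.1 - 1, by omega⟩, ⟨q.2 - 2, by omega⟩), ?_, ?_⟩
    · simp only [mem_filter, mem_univ, true_and, Fin.mk_le_mk]; omega
    · ext <;> simp <;> omega

lemma mul_add_le_add_min_inv_mul_exp {B β z h : ℝ} (hB : 0 < B) (hβ : 0 ≤ β) (hβ1 : β ≤ 1)
    (hz : 0 ≤ z) (hh : 0 ≤ h) :
    β * (z + h) ≤ (z + min h B⁻¹) * exp (β * B * (z + h)) := by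
  rcases le_total h B⁻¹ with hhB | hBh
  · rw [min_eq_left hhB]
    have : 1 ≤ exp (β * B * (z + h)) := one_le_exp (by positivity)
    nlinarith
  · rw [min_eq_right hBh]
    calc β * (z + h) = B⁻¹ * (β * B * (z + h)) := by field_simp
      _ ≤ (z + B⁻¹) * exp (β * B * (z + h)) := by
        gcongr
        · linarith
        · linarith [add_one_le_exp (β * B * (z + h))]

lemma mul_measureReal_le_setIntegral {X : Type*} [MeasurableSpace X] {μ : Measure X}
    {f : X → ℝ} {K S : Set X} {m : ℝ} (hK : MeasurableSet K) (hKμ : μ K ≠ ⊤)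
    (hS : MeasurableSet S) (hKS : K ⊆ S) (hf : IntegrableOn f S μ)
    (hf0 : ∀ x ∈ S, 0 ≤ f x) (hm : ∀ x ∈ K, m ≤ f x) :
    m * μ.real K ≤ ∫ x in S, f x ∂μ :=
  (setIntegral_ge_of_const_le_real hK hKμ hm (hf.mono_set hKS)).trans
    (setIntegral_mono_set hf (ae_restrict_of_forall_mem hS hf0) hKS.eventuallyLE)

section Vandermonde

variable {n : ℕ} {x : Fin (n + 1) → ℝ} {B : ℝ}

noncomputable def cappedGap (B : ℝ) (x : Fin (n + 1) → ℝ) (a : Fin n) : ℝ :=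
  min (x a.succ - x a.castSucc) B⁻¹

lemma cappedGap_pos (hB : 0 < B) (hx : StrictMono x) (a : Fin n) : 0 < cappedGap B x a :=
  lt_min (sub_pos.2 (hx a.castSucc_lt_succ)) (inv_pos.2 hB)

lemma cappedGap_le_sub (a : Fin n) : cappedGap B x a ≤ x a.succ - x a.castSucc :=
  min_le_left _ _

lemma cappedGap_le_inv (a : Fin n) : cappedGap B x a ≤ B⁻¹ :=
  min_le_right _ _

lemma sub_add_cappedGap_nonneg (hB : 0 < B) (hx : Monotone x) {a b : Fin n} (hab : a ≤ b) :
    0 ≤ x b.castSucc - x a.castSucc + cappedGap B x b :=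
  add_nonneg (sub_nonneg.2 (hx (Fin.castSucc_le_castSucc_iff.2 hab)))
    (le_min (sub_nonneg.2 (hx (Fin.castSucc_le_succ b))) (inv_pos.2 hB).le)

lemma mul_sub_le_exp_mul_cappedGap (hB : 0 < B) {β : ℝ} (hβ : 0 ≤ β) (hβ1 : β ≤ 1) (hx : Monotone x)
    {a b : Fin n} (hab : a ≤ b) :
    β / 4 * (x b.succ - x a.castSucc) ≤
      exp (β * B * (x (Fin.last n) - x 0)) *
        ((x b.castSucc - x a.castSucc + cappedGap B x b) / 4) := by
  have hz : 0 ≤ x b.castSucc - x a.castSucc :=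
    sub_nonneg.2 (hx (Fin.castSucc_le_castSucc_iff.2 hab))
  have hh : 0 ≤ x b.succ - x b.castSucc := sub_nonneg.2 (hx (Fin.castSucc_le_succ b))
  have key : β * (x b.succ - x a.castSucc) ≤ (x b.castSucc - x a.castSucc + cappedGap B x b) *
      exp (β * B * (x b.succ - x a.castSucc)) := by
    have := mul_add_le_add_min_inv_mul_exp hB hβ hβ1 hz hh
    rwa [sub_add_sub_cancel'] at this
  have hexp : exp (β * B * (x b.succ - x a.castSucc)) ≤ exp (β * B * (x (Fin.last n) - x 0)) :=
    exp_le_exp.2 (mul_le_mul_of_nonneg_left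
      (sub_le_sub (hx (Fin.le_last _)) (hx (Fin.zero_le _))) (by positivity))
  have := mul_le_mul_of_nonneg_left hexp (sub_add_cappedGap_nonneg hB hx hab)
  linarith

lemma pow_mul_prod_le_exp_mul_prod (hB : 0 < B) {β : ℝ} (hβ : 0 ≤ β) (hβ1 : β ≤ 1)
    (hx : Monotone x) (P : Finset (Fin n × Fin n)) (hP : ∀ p ∈ P, p.1 ≤ p.2) :
    (β / 4) ^ #P * ∏ p ∈ P, (x p.2.succ - x p.1.castSucc) ≤
      exp (#P * (β * B * (x (Fin.last n) - x 0))) *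
        ∏ p ∈ P, (x p.2.castSucc - x p.1.castSucc + cappedGap B x p.2) / 4 := by
  rw [exp_nat_mul, ← prod_const, ← prod_const, ← prod_mul_distrib, ← prod_mul_distrib]
  refine prod_le_prod (fun p hp => mul_nonneg (by positivity) ?_)
    (fun p hp => mul_sub_le_exp_mul_cappedGap hB hβ hβ1 hx (hP p hp))
  exact sub_nonneg.2 (hx ((Fin.castSucc_le_castSucc_iff.2 (hP p hp)).trans (Fin.castSucc_le_succ _)))

lemma neg_div_mul_sum_add_le (hn : n ≠ 0) (hB : 0 ≤ B) (hx : Monotone x) :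
    -(B / (n + 1)) * ∑ i, x i + ((n : ℝ) * (n + 1))⁻¹ * B * (x (Fin.last n) - x 0) ≤
      -(B / n) * ∑ a : Fin n, x a.castSucc := by
  have hgaps : x (Fin.last n) - x 0 ≤ ∑ a : Fin n, (x (Fin.last n) - x a.castSucc) := by
    obtain ⟨m, rfl⟩ := Nat.exists_eq_succ_of_ne_zero hn
    simpa using single_le_sum (f := fun a : Fin (m + 1) => x (Fin.last _) - x a.castSucc)
      (fun a _ => sub_nonneg.2 (hx (Fin.le_last _))) (mem_univ 0)
  have hsplit : -(B / n) * ∑ a : Fin n, x a.castSucc = -(B / (n + 1)) * ∑ i, x i +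
      ((n : ℝ) * (n + 1))⁻¹ * B * ∑ a : Fin n, (x (Fin.last n) - x a.castSucc) := by
    rw [Fin.sum_univ_castSucc, sum_sub_distrib, sum_const, card_univ, Fintype.card_fin,
      nsmul_eq_mul]
    field_simp
    ring
  rw [hsplit]
  gcongr

lemma prod_sub_nonneg_of_mem_pi_Icc (hx : Monotone x) {s : Fin n → ℝ}
    (hs : s ∈ Set.univ.pi fun a => Set.Icc (x a.castSucc) (x a.succ)) :
    0 ≤ ∏ p ∈ univ.filter (fun p : Fin n × Fin n => p.1 < p.2), (s p.2 - s p.1) := by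
  refine prod_nonneg fun p hp => sub_nonneg.2 ?_
  rw [Set.mem_univ_pi] at hs
  calc s p.1 ≤ x p.1.succ := (hs p.1).2
    _ ≤ x p.2.castSucc := hx (Fin.succ_le_castSucc_iff.2 (mem_filter.1 hp).2)
    _ ≤ s p.2 := (hs p.2).1

lemma le_sub_of_mem_Icc_cappedGap (hx : Monotone x) {s : Fin n → ℝ}
    (hs : s ∈ Set.Icc (fun a => x a.castSucc + cappedGap B x a / 4)
      (fun a => x a.castSucc + cappedGap B x a / 2)) {a b : Fin n} (hab : a < b) :
    (x b.castSucc - x a.castSucc + cappedGap B x b) / 4 ≤ s b - s a := by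
  have hsb := hs.1 b
  have hsa := hs.2 a
  have hgap := cappedGap_le_sub (B := B) (x := x) a
  have hnext : x a.succ ≤ x b.castSucc := hx (Fin.succ_le_castSucc_iff.2 hab)
  dsimp only at hsb hsa
  linarith [hx (Fin.castSucc_le_succ a)]

lemma exp_mul_prod_le_setIntegral (hn : n ≠ 0) (hB : 0 < B) (hx : StrictMono x) :
    exp (-(1 / 2)) * exp (-(B / n) * ∑ a : Fin n, x a.castSucc) *
        ∏ p ∈ univ.filter (fun p : Fin n × Fin n => p.1 ≤ p.2),
          (x p.2.castSucc - x p.1.castSucc + cappedGap B x p.2) / 4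
      ≤ ∫ s in Set.univ.pi (fun a : Fin n => Set.Icc (x a.castSucc) (x a.succ)),
          exp (-(B / n) * ∑ a, s a) *
            ∏ p ∈ univ.filter (fun p : Fin n × Fin n => p.1 < p.2), (s p.2 - s p.1) := by
  set K := Set.Icc (fun a : Fin n => x a.castSucc + cappedGap B x a / 4)
    (fun a => x a.castSucc + cappedGap B x a / 2)
  have hgap := cappedGap_pos hB hx
  have hvol : volume.real K = ∏ a, cappedGap B x a / 4 := by
    rw [measureReal_def, Real.volume_Icc_pi_toReal fun a => by linarith [hgap a]]
    congr 1 with a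
    ring
  rw [prod_filter_le_eq_prod_filter_lt_mul_prod]
  simp only [sub_self, zero_add]
  rw [← hvol, ← mul_assoc]
  have hKS : K ⊆ Set.univ.pi fun a => Set.Icc (x a.castSucc) (x a.succ) := by
    rw [Set.pi_univ_Icc]
    refine Set.Icc_subset_Icc (fun a => ?_) (fun a => ?_) <;>
      dsimp only <;> linarith [hgap a, cappedGap_le_sub (B := B) (x := x) a]
  refine mul_measureReal_le_setIntegral measurableSet_Icc isCompact_Icc.measure_lt_top.ne
    (MeasurableSet.univ_pi fun _ => measurableSet_Icc) hKS ?_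
    (fun s hs => mul_nonneg (exp_nonneg _) (prod_sub_nonneg_of_mem_pi_Icc hx.monotone hs))
    (fun s hs => ?_)
  · exact (Continuous.continuousOn (by fun_prop)).integrableOn_compact
      (isCompact_univ_pi fun _ => isCompact_Icc)
  have hsum : B / n * ∑ a, s a ≤ B / n * ∑ a : Fin n, x a.castSucc + 1 / 2 :=
    calc B / n * ∑ a, s a ≤ B / n * ∑ a : Fin n, (x a.castSucc + B⁻¹ / 2) := by
          gcongr with a
          linarith [hs.2 a, cappedGap_le_inv (B := B) (x := x) a]
      _ = B / n * ∑ a : Fin n, x a.castSucc + 1 / 2 := by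
          rw [sum_add_distrib, sum_const, card_univ, Fintype.card_fin, nsmul_eq_mul]
          field_simp
  rw [← exp_add]
  refine mul_le_mul (exp_le_exp.2 (by linarith)) (prod_le_prod (fun p hp => ?_)
    (fun p hp => le_sub_of_mem_Icc_cappedGap hx.monotone hs (mem_filter.1 hp).2))
    (prod_nonneg fun p hp => ?_) (exp_nonneg _) <;>
  exact div_nonneg (sub_add_cappedGap_nonneg hB hx.monotone (mem_filter.1 hp).2.le) zero_le_four

lemma mul_exp_mul_prod_le_setIntegral (hn : n ≠ 0) (hB : 0 < B) (hx : StrictMono x) {c β : ℝ}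
    (hβ : 0 ≤ β) (hβ1 : β ≤ 1)
    (hc : c ≤ exp (-(1 / 2)) * (β / 4) ^ #(univ.filter fun p : Fin n × Fin n => p.1 ≤ p.2))
    (hcβ : c + #(univ.filter fun p : Fin n × Fin n => p.1 ≤ p.2) * β ≤ ((n : ℝ) * (n + 1))⁻¹) :
    c * exp (-(B / (n + 1)) * ∑ i, x i) * exp (c * B * (x (Fin.last n) - x 0)) *
        ∏ p ∈ univ.filter (fun p : Fin n × Fin n => p.1 ≤ p.2), (x p.2.succ - x p.1.castSucc)
      ≤ ∫ s in Set.univ.pi (fun a : Fin n => Set.Icc (x a.castSucc) (x a.succ)),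
          exp (-(B / n) * ∑ a, s a) *
            ∏ p ∈ univ.filter (fun p : Fin n × Fin n => p.1 < p.2), (s p.2 - s p.1) := by
  set P := univ.filter fun p : Fin n × Fin n => p.1 ≤ p.2
  set L := x (Fin.last n) - x 0
  set R := ∏ p ∈ P, (x p.2.succ - x p.1.castSucc)
  set Q := ∏ p ∈ P, (x p.2.castSucc - x p.1.castSucc + cappedGap B x p.2) / 4
  have hL : 0 ≤ L := sub_nonneg.2 (hx.monotone (Fin.zero_le _))
  have hR : 0 ≤ R := prod_nonneg fun p hp => sub_nonneg.2 (hx.monotone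
    ((Fin.castSucc_le_castSucc_iff.2 (mem_filter.1 hp).2).trans (Fin.castSucc_le_succ _)))
  have hQ : 0 ≤ Q := prod_nonneg fun p hp =>
    div_nonneg (sub_add_cappedGap_nonneg hB hx.monotone (mem_filter.1 hp).2) zero_le_four
  have hexp : c * B * L + #P * (β * B * L) ≤ ((n : ℝ) * (n + 1))⁻¹ * B * L := by
    have := mul_le_mul_of_nonneg_right hcβ (by positivity : 0 ≤ B * L)
    linarith
  calc c * exp (-(B / (n + 1)) * ∑ i, x i) * exp (c * B * L) * R
      ≤ exp (-(1 / 2)) * (β / 4) ^ #P * exp (-(B / (n + 1)) * ∑ i, x i) * exp (c * B * L) * R := by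
        gcongr
    _ = exp (-(1 / 2)) * exp (-(B / (n + 1)) * ∑ i, x i) * exp (c * B * L) *
          ((β / 4) ^ #P * R) := by ring
    _ ≤ exp (-(1 / 2)) * exp (-(B / (n + 1)) * ∑ i, x i) * exp (c * B * L) *
          (exp (#P * (β * B * L)) * Q) :=
        mul_le_mul_of_nonneg_left (pow_mul_prod_le_exp_mul_prod hB hβ hβ1 hx.monotone P
          fun p hp => (mem_filter.1 hp).2) (by positivity)
    _ = exp (-(1 / 2)) * exp (-(B / (n + 1)) * ∑ i, x i) * exp (c * B * L + #P * (β * B * L)) *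
          Q := by rw [exp_add]; ring
    _ ≤ exp (-(1 / 2)) * exp (-(B / (n + 1)) * ∑ i, x i) *
          exp (((n : ℝ) * (n + 1))⁻¹ * B * L) * Q := by gcongr
    _ = exp (-(1 / 2)) * exp (-(B / (n + 1)) * ∑ i, x i + ((n : ℝ) * (n + 1))⁻¹ * B * L) * Q := by
        rw [exp_add]; ring
    _ ≤ exp (-(1 / 2)) * exp (-(B / n) * ∑ a : Fin n, x a.castSucc) * Q := by
        gcongr
        exact neg_div_mul_sum_add_le hn hB.le hx.monotone
    _ ≤ _ := exp_mul_prod_le_setIntegral hn hB hx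

end Vandermonde

theorem exists_pos_mul_exp_mul_prod_le_setIntegral (n : ℕ) (hn : n ≠ 0) :
    ∃ c > 0, ∀ B > 0, ∀ x : Fin (n + 1) → ℝ, StrictMono x →
      c * exp (-(B / (n + 1)) * ∑ i, x i) * exp (c * B * (x (Fin.last n) - x 0)) *
          ∏ p ∈ univ.filter (fun p : Fin n × Fin n => p.1 ≤ p.2), (x p.2.succ - x p.1.castSucc)
        ≤ ∫ s in Set.univ.pi (fun a : Fin n => Set.Icc (x a.castSucc) (x a.succ)),
            exp (-(B / n) * ∑ a, s a) *
              ∏ p ∈ univ.filter (fun p : Fin n × Fin n => p.1 < p.2), (s p.2 - s p.1) := by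
  -- `κ` is the rate of the gain in `neg_div_mul_sum_add_le`; `β` is small enough that the at
  -- most `n * n` pair losses use up only half of it.
  set κ : ℝ := ((n : ℝ) * (n + 1))⁻¹
  set β : ℝ := κ / (2 * n ^ 2)
  have hn1 : (1 : ℝ) ≤ n := Nat.one_le_cast.2 (Nat.one_le_iff_ne_zero.2 hn)
  have hβ : 0 < β := by positivity
  have hβ1 : β ≤ 1 := div_le_one_of_le₀ ((inv_le_one_of_one_le₀ (by nlinarith)).trans
    (by nlinarith)) (by positivity)
  have hP : #(univ.filter fun p : Fin n × Fin n => p.1 ≤ p.2) ≤ n * n :=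
    (card_filter_le _ _).trans (by simp)
  have hPβ : (#(univ.filter fun p : Fin n × Fin n => p.1 ≤ p.2) : ℝ) * β ≤ κ / 2 :=
    calc _ ≤ (n * n : ℕ) * β := by gcongr
      _ = κ / 2 := by simp only [β]; push_cast; field_simp
  refine ⟨min (κ / 2) (exp (-(1 / 2)) * (β / 4) ^ (n * n)), by positivity, fun B hB x hx =>
    mul_exp_mul_prod_le_setIntegral hn hB hx hβ.le hβ1 ?_ ?_⟩
  · exact (min_le_right _ _).trans (mul_le_mul_of_nonneg_left
      (pow_le_pow_of_le_one (by positivity) (by linarith) hP) (exp_nonneg _))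
  · linarith [min_le_left (κ / 2) (exp (-(1 / 2)) * (β / 4) ^ (n * n))]

theorem stmt15 (d : ℕ) (hd : 2 ≤ d) :
    ∃ c : ℝ, 0 < c ∧ ∀ B : ℝ, 0 < B → ∀ t : ℕ → ℝ,
      (∀ i, 1 ≤ i → i < d → t i < t (i + 1)) →
      c * Real.exp (-(B / d) * ∑ i ∈ Finset.Icc 1 d, t i) *
          Real.exp (c * B * (t d - t 1)) *
          ∏ p ∈ (Finset.Icc 1 d ×ˢ Finset.Icc 1 d).filter (fun p => p.1 < p.2),
            (t p.2 - t p.1)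
        ≤ ∫ s in Set.univ.pi (fun j : Fin (d - 1) =>
              Set.Icc (t ((j : ℕ) + 1)) (t ((j : ℕ) + 2))),
            Real.exp (-(B / ((d : ℝ) - 1)) * ∑ j, s j) *
              ∏ p ∈ Finset.univ.filter (fun p : Fin (d - 1) × Fin (d - 1) => p.1 < p.2),
                (s p.2 - s p.1) := by
  obtain ⟨n, rfl⟩ : ∃ n, d = n + 1 := ⟨d - 1, by omega⟩
  obtain ⟨c, hc, hbound⟩ := exists_pos_mul_exp_mul_prod_le_setIntegral n (by omega)
  refine ⟨c, hc, fun B hB t ht => ?_⟩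
  have hx : StrictMono fun i : Fin (n + 1) => t (i + 1) :=
    Fin.strictMono_iff_lt_succ.2 fun i => ht _ (by omega) (by simp)
  rw [sum_Icc_one_eq_sum_fin, prod_filter_lt_Icc_eq_prod_filter_le_fin (fun i j => t j - t i),
    Nat.cast_add_one, add_sub_cancel_right]
  exact hbound B hB _ hx
end

section
/- If $\phi''>0$ is nondecreasing and log-concave on $(0,\infty)$, then $\phi'(t_2)-\phi'(t_1)=\int_{t_1}^{t_2}\phi''(s)\,ds \ge c\,(t_2-t_1)\sqrt{\phi''(t_1)\phi''(t_2)}$ for all $0<t_1<t_2$, with an absolute constant $c>0$. -/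
theorem stmt16 :
    ∃ c : ℝ, 0 < c ∧ ∀ φ g : ℝ → ℝ,
      (∀ t ∈ Set.Ioi (0:ℝ), HasDerivAt (deriv φ) (g t) t) →
      (∀ t ∈ Set.Ioi (0:ℝ), 0 < g t) →
      MonotoneOn g (Set.Ioi 0) →
      (∀ s ∈ Set.Ioi (0:ℝ), ∀ u ∈ Set.Ioi (0:ℝ), ∀ θ ∈ Set.Icc (0:ℝ) 1,
        g s ^ θ * g u ^ (1 - θ) ≤ g (θ * s + (1 - θ) * u)) →
      ∀ t₁ t₂ : ℝ, 0 < t₁ → t₁ < t₂ →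
        c * (t₂ - t₁) * Real.sqrt (g t₁ * g t₂) ≤ deriv φ t₂ - deriv φ t₁ := by
  refine ⟨1/2, by norm_num, ?_⟩
  intro φ g hder hpos hmono hlc t₁ t₂ ht₁ ht
  set m : ℝ := (t₁ + t₂) / 2 with hm
  have hm1 : t₁ < m := by simp only [hm]; linarith
  have hm2 : m < t₂ := by simp only [hm]; linarith
  have hm0 : 0 < m := lt_trans ht₁ hm1
  have ht₂ : 0 < t₂ := lt_trans ht₁ ht
  -- continuity of deriv φ on subintervals of (0,∞)
  have hcont : ∀ x ∈ Set.Ioi (0:ℝ), ContinuousAt (deriv φ) x :=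
    fun x hx => (hder x hx).continuousAt
  -- MVT on [m, t₂]
  obtain ⟨ξ, hξ, hξs⟩ := exists_hasDerivAt_eq_slope (deriv φ) g hm2
    (fun x hx => (hcont x (lt_of_lt_of_le hm0 hx.1)).continuousWithinAt)
    (fun x hx => hder x (lt_trans hm0 hx.1))
  -- MVT on [t₁, m]
  obtain ⟨η, hη, hηs⟩ := exists_hasDerivAt_eq_slope (deriv φ) g hm1
    (fun x hx => (hcont x (lt_of_lt_of_le ht₁ hx.1)).continuousWithinAt)
    (fun x hx => hder x (lt_trans ht₁ hx.1))
  have hξ0 : (0:ℝ) < ξ := lt_trans hm0 hξ.1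
  have hη0 : (0:ℝ) < η := lt_trans ht₁ hη.1
  have h1 : deriv φ t₂ - deriv φ m = g ξ * (t₂ - m) := by
    rw [eq_div_iff (sub_ne_zero.mpr hm2.ne')] at hξs; linarith [hξs]
  have h2 : deriv φ m - deriv φ t₁ = g η * (m - t₁) := by
    rw [eq_div_iff (sub_ne_zero.mpr hm1.ne')] at hηs; linarith [hηs]
  have h2' : 0 ≤ deriv φ m - deriv φ t₁ := by
    rw [h2]; exact mul_nonneg (le_of_lt (hpos η hη0)) (by linarith [hη.2])
  -- log-concavity at midpoint
  have hlcm := hlc t₁ ht₁ t₂ ht₂ (1/2) (by norm_num)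
  have hmid : (1/2 : ℝ) * t₁ + (1 - 1/2) * t₂ = m := by simp only [hm]; ring
  rw [hmid] at hlcm
  have hsqrt : Real.sqrt (g t₁ * g t₂) = g t₁ ^ (1/2 : ℝ) * g t₂ ^ (1 - 1/2 : ℝ) := by
    rw [Real.sqrt_eq_rpow, Real.mul_rpow (le_of_lt (hpos t₁ ht₁)) (le_of_lt (hpos t₂ ht₂))]
    norm_num
  have hgm : Real.sqrt (g t₁ * g t₂) ≤ g ξ := by
    rw [hsqrt]
    exact le_trans hlcm (hmono (Set.mem_Ioi.mpr hm0) (Set.mem_Ioi.mpr hξ0) (le_of_lt hξ.1))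
  have ht2m : t₂ - m = (t₂ - t₁) / 2 := by simp only [hm]; ring
  have key : 1/2 * (t₂ - t₁) * Real.sqrt (g t₁ * g t₂) ≤ g ξ * (t₂ - m) := by
    rw [ht2m]
    have h0 : 0 ≤ (t₂ - t₁) / 2 := by linarith
    calc 1/2 * (t₂ - t₁) * Real.sqrt (g t₁ * g t₂)
        = (t₂ - t₁) / 2 * Real.sqrt (g t₁ * g t₂) := by ring
      _ ≤ (t₂ - t₁) / 2 * g ξ := by
          exact mul_le_mul_of_nonneg_left hgm h0
      _ = g ξ * ((t₂ - t₁) / 2) := by ring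
  linarith [key, h1, h2']
end

section
/- Let $\gamma:I\to\mathbb{R}^d$ be $C^1$ and suppose $\det(\gamma'(t_1),\ldots,\gamma'(t_d))>0$ whenever $t_1<\cdots<t_d$ in $I$. Then the map $\Phi(t_1,\ldots,t_d)=\sum_{j=1}^d(-1)^j\gamma(t_j)$ is injective on the ordered simplex $\{(t_1,\ldots,t_d)\in I^d: t_1<\cdots<t_d\}$. -/
/-!
Suppose `Φ t = Φ t'` with `t ≠ t'`, and sort the points of both tuples into a grid
`y₀ < ⋯ < yₙ`. Abel summation writes `Φ t - Φ t'` as `∑ bₖ • (γ yₖ₊₁ - γ yₖ)`, where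
`bₖ ∈ {-1, 0, 1}` compares the parities of the numbers of points of `t` and of `t'` up to `yₖ`.
Across a sign change of `b` both counts increase, so the cells can be grouped into `d`
consecutive blocks on each of which `b` has constant sign. This gives a nontrivial linear
relation between `d` nonnegative combinations `uₗ` of the increments over the blocks. But
`det (uₗ) > 0`: the determinant is multilinear in the rows, and on each cell `φ ∘ γ` is
increasing for every functional `φ` that is positive on the derivatives of `γ` there, so the
positivity of `det (γ' x₁, …, γ' x_d)` for increasing `x` passes from derivatives to the `uₗ`
one row at a time.
-/

open Finset

section PositiveBidual

variable {E : Type*} [AddCommGroup E] [Module ℝ E]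

def positiveBidual (S : Set E) : Set E :=
  {u | ∀ φ : E →ₗ[ℝ] ℝ, (∀ v ∈ S, 0 < φ v) → 0 < φ u}

theorem positiveBidual_mono {S T : Set E} (h : S ⊆ T) : positiveBidual S ⊆ positiveBidual T :=
  fun _ hu φ hφ => hu φ fun v hv => hφ v (h hv)

theorem sum_smul_mem_positiveBidual {κ : Type*} {S : Set E} {s : Finset κ} {a : κ → ℝ}
    {w : κ → E} (ha : ∀ k ∈ s, 0 ≤ a k) (hw : ∀ k ∈ s, w k ∈ positiveBidual S)
    (hpos : ∃ k ∈ s, 0 < a k) : ∑ k ∈ s, a k • w k ∈ positiveBidual S := by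
  intro φ hφ
  simp only [map_sum, map_smul, smul_eq_mul]
  obtain ⟨k, hk, hak⟩ := hpos
  exact Finset.sum_pos' (fun i hi => mul_nonneg (ha i hi) (hw i hi φ hφ).le)
    ⟨k, hk, mul_pos hak (hw k hk φ hφ)⟩

theorem MultilinearMap.pos_of_mem_positiveBidual {ι : Type*} [Fintype ι] [DecidableEq ι]
    (f : MultilinearMap ℝ (fun _ : ι => E) ℝ) {S : ι → Set E}
    (hf : ∀ v : ι → E, (∀ i, v i ∈ S i) → 0 < f v) {u : ι → E}
    (hu : ∀ i, u i ∈ positiveBidual (S i)) : 0 < f u := by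
  suffices key : ∀ s : Finset ι, ∀ v : ι → E, (∀ i ∉ s, v i ∈ S i) → 0 < f (s.piecewise u v) by
    simpa using key univ u (by simp)
  intro s
  induction s using Finset.induction_on with
  | empty => exact fun v hv => by simpa using hf v fun i => hv i (Finset.notMem_empty i)
  | insert i s hi ih =>
    intro v hv
    rw [Finset.piecewise_insert]
    refine hu i (f.toLinearMap (s.piecewise u v) i) fun z hz => ?_
    rw [MultilinearMap.toLinearMap_apply, Finset.update_piecewise_of_notMem _ _ _ hi]
    refine ih _ fun j hj => ?_
    rcases eq_or_ne j i with rfl | hji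
    · simpa using hz
    · simpa [hji] using hv j (by simp [hji, hj])

end PositiveBidual

theorem exists_eq_mul_nonneg_of_mul_nonneg {κ : Type*} {s : Finset κ} {b : κ → ℝ}
    (hb : ∀ k ∈ s, ∀ k' ∈ s, 0 ≤ b k * b k') :
    ∃ c : ℝ, ∃ a : κ → ℝ, (∀ k ∈ s, 0 ≤ a k ∧ b k = c * a k) ∧ (s.Nonempty → ∃ k ∈ s, 0 < a k) := by
  by_cases h : ∃ k ∈ s, b k ≠ 0
  · obtain ⟨k₀, hk₀, hbk₀⟩ := h
    refine ⟨b k₀, fun k => b k / b k₀, fun k hk => ⟨?_, by field_simp⟩,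
      fun _ => ⟨k₀, hk₀, by simp [hbk₀]⟩⟩
    exact div_nonneg_iff.2 (mul_nonneg_iff.1 (hb k hk k₀ hk₀))
  · push Not at h
    exact ⟨0, fun _ => 1, fun k hk => ⟨zero_le_one, by simp [h k hk]⟩,
      fun ⟨k, hk⟩ => ⟨k, hk, one_pos⟩⟩

section Curve

open Set

theorem sub_mem_positiveBidual_image_deriv {F : Type*} [NormedAddCommGroup F] [NormedSpace ℝ F]
    [FiniteDimensional ℝ F] {γ : ℝ → F} {a b : ℝ} (hab : a < b)
    (hcont : ContinuousOn γ (Icc a b)) (hdiff : DifferentiableOn ℝ γ (Ioo a b)) :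
    γ b - γ a ∈ positiveBidual (deriv γ '' Ioo a b) := by
  intro φ hφ
  set ψ : F →L[ℝ] ℝ := LinearMap.toContinuousLinearMap φ
  have hmono : StrictMonoOn (ψ ∘ γ) (Icc a b) := by
    refine strictMonoOn_of_deriv_pos (convex_Icc a b) (ψ.continuous.comp_continuousOn hcont) ?_
    intro x hx
    rw [interior_Icc] at hx
    have hγx := (hdiff.differentiableAt (isOpen_Ioo.mem_nhds hx)).hasDerivAt
    rw [(ψ.hasFDerivAt.comp_hasDerivAt x hγx).deriv]
    exact hφ _ (mem_image_of_mem _ hx)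
  have := hmono (left_mem_Icc.2 hab.le) (right_mem_Icc.2 hab.le) hab
  simpa [ψ, sub_pos] using this

theorem det_pos_of_blocks {d n : ℕ} {I : Set ℝ} (hI : I.OrdConnected) {γ : ℝ → Fin d → ℝ}
    (hγ : DifferentiableOn ℝ γ I)
    (hdet : ∀ t : Fin d → ℝ, (∀ i, t i ∈ I) → StrictMono t →
      0 < Matrix.det (Matrix.of fun i j => deriv γ (t i) j))
    {y : ℕ → ℝ} (hy : StrictMonoOn y (Set.Iic n)) (hyI : ∀ k ≤ n, y k ∈ I)
    {σ : ℕ → ℕ} (hσ : MonotoneOn σ (Set.Iio n)) {a : ℕ → ℝ} (ha : ∀ k < n, 0 ≤ a k)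
    (hblock : ∀ l : Fin d, ∃ k < n, σ k = l ∧ 0 < a k) :
    0 < Matrix.det (Matrix.of fun l : Fin d =>
      ∑ k ∈ (range n).filter (σ · = l), a k • (γ (y (k + 1)) - γ (y k))) := by
  have hcell : ∀ k < n, Icc (y k) (y (k + 1)) ⊆ I := fun k hk =>
    hI.out (hyI k hk.le) (hyI (k + 1) hk)
  have hlt : ∀ k < n, y k < y (k + 1) := fun k hk =>
    hy (mem_Iic.2 hk.le) (mem_Iic.2 hk) k.lt_succ_self
  let S : Fin d → Set (Fin d → ℝ) := fun l =>
    deriv γ '' {x | ∃ k < n, σ k = l ∧ x ∈ Ioo (y k) (y (k + 1))}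
  refine Matrix.detRowAlternating.toMultilinearMap.pos_of_mem_positiveBidual (S := S) ?_ ?_
  · intro v hv
    choose x hx hvx using hv
    choose k hkn hσk hxk using hx
    have hxmono : StrictMono x := by
      intro l l' hll'
      have hkk' : k l < k l' := by
        by_contra! h
        have := hσ (hkn l') (hkn l) h
        rw [hσk, hσk] at this
        exact absurd hll' (not_lt.2 (by exact_mod_cast this))
      calc x l < y (k l + 1) := (hxk l).2
        _ ≤ y (k l') :=
          hy.monotoneOn (mem_Iic.2 (by have := hkn l'; omega)) (mem_Iic.2 (hkn l').le) hkk'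
        _ < x l' := (hxk l').1
    obtain rfl : v = fun l => deriv γ (x l) := funext fun l => (hvx l).symm
    exact hdet x (fun l => hcell _ (hkn l) (Ioo_subset_Icc_self (hxk l))) hxmono
  · intro l
    obtain ⟨k₀, hk₀, hσk₀, hak₀⟩ := hblock l
    refine sum_smul_mem_positiveBidual (fun k hk => ha k (mem_range.1 (mem_filter.1 hk).1))
      (fun k hk => ?_) ⟨k₀, by simp [hk₀, hσk₀], hak₀⟩
    obtain ⟨hkn, hσk⟩ := mem_filter.1 hk
    rw [Finset.mem_range] at hkn
    have hsub : Ioo (y k) (y (k + 1)) ⊆ {x | ∃ k < n, σ k = l ∧ x ∈ Ioo (y k) (y (k + 1))} :=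
      fun x hx => ⟨k, hkn, hσk, hx⟩
    refine positiveBidual_mono (Set.image_mono hsub) ?_
    exact sub_mem_positiveBidual_image_deriv (hlt k hkn)
      ((hγ.mono (hcell k hkn)).continuousOn) (hγ.mono (Ioo_subset_Icc_self.trans (hcell k hkn)))

theorem sum_smul_sub_ne_zero_of_blocks {d n : ℕ} {I : Set ℝ} (hI : I.OrdConnected)
    {γ : ℝ → Fin d → ℝ} (hγ : DifferentiableOn ℝ γ I)
    (hdet : ∀ t : Fin d → ℝ, (∀ i, t i ∈ I) → StrictMono t →
      0 < Matrix.det (Matrix.of fun i j => deriv γ (t i) j))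
    {y : ℕ → ℝ} (hy : StrictMonoOn y (Set.Iic n)) (hyI : ∀ k ≤ n, y k ∈ I)
    {σ : ℕ → ℕ} (hσ : MonotoneOn σ (Set.Iio n)) (hσd : ∀ k < n, σ k < d)
    (hσsurj : ∀ l < d, ∃ k < n, σ k = l) {b : ℕ → ℝ}
    (hsign : ∀ k < n, ∀ k' < n, σ k = σ k' → 0 ≤ b k * b k') (hb : ∃ k < n, b k ≠ 0) :
    ∑ k ∈ range n, b k • (γ (y (k + 1)) - γ (y k)) ≠ 0 := by
  set w : ℕ → Fin d → ℝ := fun k => γ (y (k + 1)) - γ (y k)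
  have hblock : ∀ l, ∃ c : ℝ, ∃ a : ℕ → ℝ, (∀ k ∈ (range n).filter (σ · = l),
      0 ≤ a k ∧ b k = c * a k) ∧
      (((range n).filter (σ · = l)).Nonempty → ∃ k ∈ (range n).filter (σ · = l), 0 < a k) :=
    fun l => exists_eq_mul_nonneg_of_mul_nonneg fun k hk k' hk' => by
      simp only [Finset.mem_filter, Finset.mem_range] at hk hk'
      exact hsign k hk.1 k' hk'.1 (hk.2.trans hk'.2.symm)
  choose c a hfactor hpos using hblock
  have hmem : ∀ k < n, k ∈ (range n).filter (σ · = σ k) := fun k hk => by simp [hk]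
  have hdet_pos := det_pos_of_blocks hI hγ hdet hy hyI hσ (a := fun k => a (σ k) k)
    (fun k hk => (hfactor _ k (hmem k hk)).1) fun l => by
      obtain ⟨k, hk, hσk⟩ := hσsurj l l.isLt
      obtain ⟨k', hk', hak'⟩ := hpos l ⟨k, by simp [hk, hσk]⟩
      simp only [Finset.mem_filter, Finset.mem_range] at hk'
      exact ⟨k', hk'.1, hk'.2, by rwa [hk'.2]⟩
  intro hsum
  refine hdet_pos.ne' (Matrix.exists_vecMul_eq_zero_iff.1 ⟨fun l => c l, ?_, ?_⟩)
  · obtain ⟨k, hk, hbk⟩ := hb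
    intro hc
    have := congrFun hc ⟨σ k, hσd k hk⟩
    simp only [Pi.zero_apply] at this
    exact hbk (by rw [(hfactor _ k (hmem k hk)).2, this, zero_mul])
  · rw [Matrix.vecMul_eq_sum, ← hsum]
    change ∑ l : Fin d, c l • ∑ k ∈ (range n).filter (σ · = l), a (σ k) k • w k = _
    simp only [Finset.smul_sum, smul_smul]
    rw [Fin.sum_univ_eq_sum_range (fun l => ∑ k ∈ (range n).filter (σ · = l),
      (c l * a (σ k) k) • w k), ← Finset.sum_fiberwise_of_maps_to (g := σ)
      (fun k hk => Finset.mem_range.2 (hσd k (Finset.mem_range.1 hk)))]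
    refine Finset.sum_congr rfl fun l _ => Finset.sum_congr rfl fun k hk => ?_
    obtain ⟨hkn, rfl⟩ := Finset.mem_filter.1 hk
    rw [(hfactor _ k hk).2]

end Curve

theorem Nat.exists_eq_of_le_succ {f : ℕ → ℕ} (hf : ∀ k, f (k + 1) ≤ f k + 1) {l : ℕ}
    (h0 : f 0 ≤ l) : ∀ {m}, l ≤ f m → ∃ k ≤ m, f k = l
  | 0, hm => ⟨0, le_rfl, le_antisymm h0 hm⟩
  | m + 1, hm => by
    by_cases h : l ≤ f m
    · obtain ⟨k, hk, hfk⟩ := Nat.exists_eq_of_le_succ hf h0 h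
      exact ⟨k, by omega, hfk⟩
    · exact ⟨m + 1, le_rfl, by have := hf m; omega⟩

/-- Padding `μ` by `k + d - n` makes it reach every level below `d` without merging two values
of `μ`. -/
theorem exists_refinement_onto_of_le_succ {μ : ℕ → ℕ} {d n : ℕ} (hdn : d ≤ n) (hμ : Monotone μ)
    (hμ0 : μ 0 = 0) (hμs : ∀ k, μ (k + 1) ≤ μ k + 1) (hμd : ∀ k < n, μ k < d) :
    ∃ σ : ℕ → ℕ, Monotone σ ∧ (∀ k < n, σ k < d) ∧ (∀ l < d, ∃ k < n, σ k = l) ∧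
      ∀ k < n, ∀ k' < n, σ k = σ k' → μ k = μ k' := by
  refine ⟨fun k => max (μ k) (k + d - n), fun k k' hkk' => ?_, fun k hk => ?_, fun l hl => ?_,
    fun k hk k' hk' hσ => ?_⟩
  · have := hμ hkk'
    simp only
    omega
  · have := hμd k hk
    simp only
    omega
  · have hlast : l ≤ max (μ (n - 1)) (n - 1 + d - n) := le_max_of_le_right (by omega)
    obtain ⟨k, hk, hσk⟩ := Nat.exists_eq_of_le_succ (f := fun k => max (μ k) (k + d - n))
      (fun k => by have := hμs k; omega) (by simp [hμ0]; omega) hlast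
    exact ⟨k, by omega, hσk⟩
  · simp only at hσ
    rcases lt_trichotomy k k' with h | rfl | h
    · have := hμ h.le
      omega
    · rfl
    · have := hμ h.le
      omega

section CountLE

variable {α : Type*} [LinearOrder α] {d : ℕ}

def countLE (t : Fin d → α) (x : α) : ℕ := #{j | t j ≤ x}

theorem countLE_le (t : Fin d → α) (x : α) : countLE t x ≤ d :=
  (card_filter_le _ _).trans (card_fin d).le

theorem countLE_mono (t : Fin d → α) : Monotone (countLE t) := fun _ _ hxx' =>
  card_le_card fun j hj => by
    simp only [mem_filter, mem_univ, true_and] at hj ⊢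
    exact hj.trans hxx'

theorem lt_countLE_iff {t : Fin d → α} (ht : Monotone t) {x : α} {j : Fin d} :
    (j : ℕ) < countLE t x ↔ t j ≤ x := by
  constructor
  · intro hj
    by_contra! hx
    have : univ.filter (fun i => t i ≤ x) ⊆ Iio j := fun i hi => by
      simp only [mem_filter, mem_univ, true_and] at hi
      exact mem_Iio.2 (lt_of_not_ge fun hji => (hx.trans_le (ht hji)).not_ge hi)
    have := card_le_card this
    rw [Fin.card_Iio] at this
    exact absurd hj (not_lt.2 this)
  · intro hj
    have : Iic j ⊆ univ.filter (fun i => t i ≤ x) := fun i hi => by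
      simpa using (ht (mem_Iic.1 hi)).trans hj
    have := card_le_card this
    rw [Fin.card_Iic] at this
    exact this

theorem card_filter_eq_le_one {t : Fin d → α} (ht : Function.Injective t) (x : α) :
    #(univ.filter fun j => t j = x) ≤ 1 :=
  card_le_one.2 fun i hi j hj => by
    simp only [mem_filter, mem_univ, true_and] at hi hj
    exact ht (hi.trans hj.symm)

theorem countLE_le_one {t : Fin d → α} (ht : Function.Injective t) {x : α}
    (h : ∀ j, x ≤ t j) : countLE t x ≤ 1 :=
  (card_le_card fun j hj => by
    simp only [mem_filter, mem_univ, true_and] at hj ⊢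
    exact le_antisymm hj (h j)).trans (card_filter_eq_le_one ht x)

theorem countLE_le_add_one {t : Fin d → α} (ht : Function.Injective t) {x x' : α}
    (hgap : ∀ j, x < t j → x' ≤ t j) : countLE t x' ≤ countLE t x + 1 := by
  have hsub : univ.filter (fun j => t j ≤ x') ⊆
      univ.filter (fun j => t j ≤ x) ∪ univ.filter (fun j => t j = x') := fun j hj => by
    simp only [mem_filter, mem_univ, true_and, mem_union] at hj ⊢
    by_cases hjx : t j ≤ x
    · exact Or.inl hjx
    · exact Or.inr (le_antisymm hj (hgap j (not_le.1 hjx)))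
  exact (card_le_card hsub).trans ((card_union_le _ _).trans
    (Nat.add_le_add_left (card_filter_eq_le_one ht x') _))

theorem countLE_apply {t : Fin d → α} (ht : StrictMono t) (j : Fin d) :
    countLE t (t j) = j + 1 := by
  have : univ.filter (fun i => t i ≤ t j) = Iic j := by ext i; simp [ht.le_iff_le]
  rw [countLE, this, Fin.card_Iic]

theorem sum_ite_le_neg_one_pow {t : Fin d → α} (ht : Monotone t) (x : α) :
    ∑ j : Fin d, (if t j ≤ x then (-1 : ℝ) ^ ((j : ℕ) + 1) else 0) =
      -(if Even (countLE t x) then 0 else 1) := by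
  have hfilter : (range d).filter (· < countLE t x) = range (countLE t x) := by
    ext j
    simp only [mem_filter, mem_range, and_iff_right_iff_imp]
    exact fun hj => hj.trans_le (countLE_le t x)
  simp_rw [← lt_countLE_iff ht]
  rw [Fin.sum_univ_eq_sum_range (fun j => if j < countLE t x then (-1 : ℝ) ^ (j + 1) else 0),
    ← sum_filter, hfilter, ← neg_one_geom_sum, ← sum_neg_distrib]
  simp [pow_succ]

def parityGap (t t' : Fin d → α) (x : α) : ℝ :=
  (if Even (countLE t x) then 0 else 1) - (if Even (countLE t' x) then 0 else 1)

/-- Where the parity gap changes sign, both counts change parity, so both strictly increase. -/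
theorem max_countLE_lt_of_parityGap_mul_neg {t t' : Fin d → α} {x x' : α} (hxx' : x ≤ x')
    (h : parityGap t t' x * parityGap t t' x' < 0) :
    max (countLE t x) (countLE t' x) - 1 < max (countLE t x') (countLE t' x') - 1 := by
  have h₁ := countLE_mono t hxx'
  have h₂ := countLE_mono t' hxx'
  simp only [parityGap, Nat.even_iff] at h
  split_ifs at h <;> norm_num at h <;> omega

theorem parityGap_swap (t t' : Fin d → α) (x : α) : parityGap t' t x = -parityGap t t' x := by
  simp only [parityGap]
  ring

theorem exists_parityGap_min_ne_zero {t t' : Fin d → α} (ht : StrictMono t)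
    (ht' : StrictMono t') (hne : t ≠ t') :
    ∃ j, min (t j) (t' j) < max (t j) (t' j) ∧ parityGap t t' (min (t j) (t' j)) ≠ 0 := by
  obtain ⟨j, hj, hmin⟩ := WellFounded.has_min wellFounded_lt {j | t j ≠ t' j}
    (Function.ne_iff.1 hne)
  have hagree : ∀ i < j, t i = t' i := fun i hi => not_not.1 fun h => hmin i h hi
  wlog hlt : t j < t' j generalizing t t'
  · obtain ⟨k, hk, hgap⟩ := this ht' ht hne.symm hj.symm (fun i h => hmin i (Ne.symm h))
      (fun i hi => (hagree i hi).symm) (lt_of_le_of_ne (not_lt.1 hlt) hj.symm)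
    refine ⟨k, by rwa [min_comm, max_comm], ?_⟩
    rwa [min_comm, parityGap_swap, neg_ne_zero] at hgap
  have hcount : countLE t' (t j) = j := by
    have : univ.filter (fun i => t' i ≤ t j) = Iio j := by
      ext i
      simp only [mem_filter, mem_univ, true_and, mem_Iio]
      constructor
      · exact fun hi => lt_of_not_ge fun hji => (hlt.trans_le (ht'.monotone hji)).not_ge hi
      · exact fun hi => (hagree i hi) ▸ (ht hi).le
    rw [countLE, this, Fin.card_Iio]
  refine ⟨j, min_lt_max.2 hlt.ne, ?_⟩
  rw [min_eq_left hlt.le, parityGap, countLE_apply ht, hcount]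
  by_cases hev : Even (j : ℕ) <;> simp [hev, Nat.even_add_one]

end CountLE

section Grid

variable {E : Type*} [AddCommGroup E]

theorem Finset.exists_enumeration {α : Type*} [LinearOrder α] {F : Finset α} {n : ℕ}
    (hF : #F = n + 1) :
    ∃ y : ℕ → α, Monotone y ∧ StrictMonoOn y (Set.Iic n) ∧ (∀ k, y k ∈ F) ∧
      ∀ x ∈ F, ∃ k ≤ n, y k = x := by
  set e := F.orderEmbOfFin hF
  refine ⟨fun k => e ⟨min k n, by omega⟩, fun k k' hkk' => e.monotone (by simp; omega),
    fun k hk k' hk' hkk' => e.strictMono ?_, fun k => F.orderEmbOfFin_mem hF _, fun x hx => ?_⟩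
  · simp only [Set.mem_Iic] at hk hk'
    rw [Fin.mk_lt_mk]
    omega
  · rw [← Finset.mem_coe, ← Finset.range_orderEmbOfFin F hF] at hx
    obtain ⟨i, rfl⟩ := hx
    exact ⟨i, by omega, congrArg e (Fin.ext (min_eq_left (by omega)))⟩

theorem sum_range_ite_le_sub {y : ℕ → ℝ} {n K : ℕ}
    (hy : StrictMonoOn y (Set.Iic n)) (hK : K ≤ n) (f : ℝ → E) :
    ∑ k ∈ range n, (if y K ≤ y k then f (y (k + 1)) - f (y k) else 0) = f (y n) - f (y K) := by
  have : (range n).filter (fun k => y K ≤ y k) = Ico K n := by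
    ext k
    simp only [mem_filter, mem_range, mem_Ico]
    constructor
    · rintro ⟨hk, hle⟩
      exact ⟨(hy.le_iff_le hK hk.le).1 hle, hk⟩
    · rintro ⟨hle, hk⟩
      exact ⟨hk, (hy.le_iff_le hK hk.le).2 hle⟩
  rw [← sum_filter, this, sum_Ico_sub (fun k => f (y k)) hK]

variable [Module ℝ E] {d : ℕ}

theorem sum_neg_one_pow_smul_eq {t : Fin d → ℝ} (ht : StrictMono t) {y : ℕ → ℝ} {n : ℕ}
    (hy : StrictMonoOn y (Set.Iic n)) (hty : ∀ j, ∃ K ≤ n, y K = t j) (f : ℝ → E) :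
    ∑ j : Fin d, (-1 : ℝ) ^ ((j : ℕ) + 1) • f (t j) =
      (∑ j : Fin d, (-1 : ℝ) ^ ((j : ℕ) + 1)) • f (y n) +
        ∑ k ∈ range n,
          (if Even (countLE t (y k)) then 0 else 1 : ℝ) • (f (y (k + 1)) - f (y k)) := by
  set w : ℕ → E := fun k => f (y (k + 1)) - f (y k)
  have hf : ∀ j, f (t j) = f (y n) - ∑ k ∈ range n, (if t j ≤ y k then w k else 0) := fun j => by
    obtain ⟨K, hK, hyK⟩ := hty j
    rw [← hyK, sum_range_ite_le_sub hy hK, sub_sub_cancel]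
  have hcoeff : ∀ k, (if Even (countLE t (y k)) then 0 else 1 : ℝ) =
      -∑ j : Fin d, (if t j ≤ y k then (-1 : ℝ) ^ ((j : ℕ) + 1) else 0) := fun k => by
    rw [sum_ite_le_neg_one_pow ht.monotone, neg_neg]
  calc ∑ j : Fin d, (-1 : ℝ) ^ ((j : ℕ) + 1) • f (t j)
      = (∑ j : Fin d, (-1 : ℝ) ^ ((j : ℕ) + 1)) • f (y n) - ∑ k ∈ range n,
          ∑ j : Fin d, (if t j ≤ y k then (-1 : ℝ) ^ ((j : ℕ) + 1) else 0) • w k := by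
        simp only [hf, smul_sub, sum_sub_distrib, sum_smul, smul_sum, ite_smul, smul_ite,
          zero_smul, smul_zero]
        rw [sum_comm]
    _ = _ := by
        simp only [hcoeff, neg_smul, sum_neg_distrib, sum_smul, ← sub_eq_add_neg]
        rfl

theorem sum_neg_one_pow_smul_sub_eq {t t' : Fin d → ℝ} (ht : StrictMono t) (ht' : StrictMono t')
    {y : ℕ → ℝ} {n : ℕ} (hy : StrictMonoOn y (Set.Iic n)) (hty : ∀ j, ∃ K ≤ n, y K = t j)
    (ht'y : ∀ j, ∃ K ≤ n, y K = t' j) (f : ℝ → E) :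
    ∑ j : Fin d, (-1 : ℝ) ^ ((j : ℕ) + 1) • f (t j) -
        ∑ j : Fin d, (-1 : ℝ) ^ ((j : ℕ) + 1) • f (t' j) =
      ∑ k ∈ range n, parityGap t t' (y k) • (f (y (k + 1)) - f (y k)) := by
  rw [sum_neg_one_pow_smul_eq ht hy hty, sum_neg_one_pow_smul_eq ht' hy ht'y,
    add_sub_add_left_eq_sub, ← sum_sub_distrib]
  simp only [parityGap, sub_smul]

end Grid

section Blocks

variable {α : Type*} [LinearOrder α] {d n : ℕ} {t t' : Fin d → α} {y : ℕ → α}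

theorem countLE_comp_succ_le (ht : Function.Injective t) (hy : Monotone y)
    (hty : ∀ j, ∃ K, y K = t j) (k : ℕ) : countLE t (y (k + 1)) ≤ countLE t (y k) + 1 :=
  countLE_le_add_one ht fun j hj => by
    obtain ⟨K, hK⟩ := hty j
    rw [← hK] at hj ⊢
    exact hy (lt_of_not_ge fun hKk => (hy hKk).not_gt hj)

theorem countLE_comp_zero_le_one (ht : Function.Injective t) (hy : Monotone y)
    (hty : ∀ j, ∃ K, y K = t j) : countLE t (y 0) ≤ 1 :=
  countLE_le_one ht fun j => (hty j).elim fun K hK => hK ▸ hy K.zero_le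

theorem exists_blocks_parityGap (hd : 0 < d) (hdn : d ≤ n) (ht : StrictMono t)
    (ht' : StrictMono t') (hy : Monotone y) (hty : ∀ j, ∃ K, y K = t j)
    (ht'y : ∀ j, ∃ K, y K = t' j) :
    ∃ σ : ℕ → ℕ, MonotoneOn σ (Set.Iio n) ∧ (∀ k < n, σ k < d) ∧ (∀ l < d, ∃ k < n, σ k = l) ∧
      ∀ k < n, ∀ k' < n, σ k = σ k' → 0 ≤ parityGap t t' (y k) * parityGap t t' (y k') := by
  obtain ⟨σ, hσ, hσd, hσsurj, hσμ⟩ := exists_refinement_onto_of_le_succ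
    (μ := fun k => max (countLE t (y k)) (countLE t' (y k)) - 1) hdn
    (fun k k' hkk' => Nat.sub_le_sub_right
      (max_le_max (countLE_mono t (hy hkk')) (countLE_mono t' (hy hkk'))) 1)
    (by
      have := countLE_comp_zero_le_one ht.injective hy hty
      have := countLE_comp_zero_le_one ht'.injective hy ht'y
      omega)
    (fun k => by
      have := countLE_comp_succ_le ht.injective hy hty k
      have := countLE_comp_succ_le ht'.injective hy ht'y k
      omega)
    (fun k _ => by have := countLE_le t (y k); have := countLE_le t' (y k); omega)
  refine ⟨σ, hσ.monotoneOn _, hσd, hσsurj, fun k hk k' hk' hσk => ?_⟩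
  have hμ := hσμ k hk k' hk' hσk
  by_contra! hneg
  rcases le_total k k' with hkk' | hk'k
  · exact (max_countLE_lt_of_parityGap_mul_neg (hy hkk') hneg).ne hμ
  · exact (max_countLE_lt_of_parityGap_mul_neg (hy hk'k) (by rwa [mul_comm])).ne hμ.symm

theorem exists_lt_parityGap_ne_zero (ht : StrictMono t) (ht' : StrictMono t') (hne : t ≠ t')
    (hy : Monotone y) (hty : ∀ j, ∃ K ≤ n, y K = t j) (ht'y : ∀ j, ∃ K ≤ n, y K = t' j) :
    ∃ K < n, parityGap t t' (y K) ≠ 0 := by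
  obtain ⟨j, hjlt, hjgap⟩ := exists_parityGap_min_ne_zero ht ht' hne
  have hgrid : ∀ x, x = t j ∨ x = t' j → ∃ K ≤ n, y K = x := by
    rintro x (rfl | rfl)
    exacts [hty j, ht'y j]
  obtain ⟨K, hK, hyK⟩ := hgrid _ (min_choice _ _)
  obtain ⟨K', hK', hyK'⟩ := hgrid _ (max_choice _ _)
  refine ⟨K, lt_of_le_of_ne hK fun hKn => hjlt.not_ge ?_, hyK ▸ hjgap⟩
  rw [← hyK, ← hyK', hKn]
  exact hy hK'

theorem card_lt_card_image_union_image (ht : StrictMono t) (ht' : StrictMono t')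
    (hne : t ≠ t') : d < #(univ.image t ∪ univ.image t') := by
  have hcard : ∀ u : Fin d → α, StrictMono u → #(univ.image u) = d := fun u hu => by
    rw [card_image_of_injective _ hu.injective, card_univ, Fintype.card_fin]
  refine (hcard t ht).symm.trans_lt (card_lt_card ⟨subset_union_left, fun hsub => hne ?_⟩)
  have himage : univ.image t' = univ.image t :=
    eq_of_subset_of_card_le (subset_union_right.trans hsub) (by rw [hcard t ht, hcard t' ht'])
  rw [← ht.range_inj ht', ← Set.image_univ, ← Set.image_univ, ← coe_univ, ← coe_image,
    ← coe_image, himage]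

end Blocks

theorem stmt19 (d : ℕ) (I : Set ℝ) (hI : I.OrdConnected) (γ : ℝ → (Fin d → ℝ))
    (hγ : ContDiffOn ℝ 1 γ I)
    (hdet : ∀ t : Fin d → ℝ, (∀ i, t i ∈ I) → StrictMono t →
      0 < Matrix.det (Matrix.of fun i j => deriv γ (t i) j)) :
    Set.InjOn (fun t : Fin d → ℝ => ∑ j : Fin d, ((-1 : ℝ) ^ ((j : ℕ) + 1)) • γ (t j))
      {t : Fin d → ℝ | (∀ i, t i ∈ I) ∧ StrictMono t} := by
  rintro t ⟨htI, ht⟩ t' ⟨ht'I, ht'⟩ heq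
  by_contra hne
  obtain ⟨i, -⟩ := Function.ne_iff.1 hne
  set F := univ.image t ∪ univ.image t'
  have hdF : d < #F := card_lt_card_image_union_image ht ht' hne
  obtain ⟨y, hy, hys, hyF, hFy⟩ := F.exists_enumeration (n := #F - 1) (by omega)
  have hty : ∀ j, ∃ K ≤ #F - 1, y K = t j := fun j => hFy _ (by simp [F])
  have ht'y : ∀ j, ∃ K ≤ #F - 1, y K = t' j := fun j => hFy _ (by simp [F])
  have hyI : ∀ k ≤ #F - 1, y k ∈ I := fun k _ => by
    rcases mem_union.1 (hyF k) with hk | hk <;> obtain ⟨j, -, hj⟩ := mem_image.1 hk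
    exacts [hj ▸ htI j, hj ▸ ht'I j]
  obtain ⟨σ, hσ, hσd, hσsurj, hsign⟩ :=
    exists_blocks_parityGap (n := #F - 1) i.pos (by omega) ht ht' hy
    (fun j => (hty j).imp fun _ => And.right) (fun j => (ht'y j).imp fun _ => And.right)
  refine sum_smul_sub_ne_zero_of_blocks hI (hγ.differentiableOn one_ne_zero) hdet hys hyI hσ hσd
    hσsurj hsign (exists_lt_parityGap_ne_zero ht ht' hne hy hty ht'y) ?_
  rw [← sum_neg_one_pow_smul_sub_eq ht ht' hys hty ht'y, sub_eq_zero]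
  exact heq
end
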